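/- arXiv:2107.11927 — 10 statements merged into one kernel-verified Lean document; each statement's English description precedes it below -/
import Mathlib

section
/- A solution ψ on the class of monotone games with agent set N satisfies PO (Pareto optimality), ETP (equal treatment property) and M (marginality) if and only if ψ is the Shapley value solution φ. -/
open Finset

/-- A monotone game on agent set `Fin n`: `u ∅ = 0` and `u` is monotone w.r.t. inclusion. -/
def IsMonotoneGame (n : ℕ) (u : Finset (Fin n) → ℝ) : Prop :=
  u ∅ = 0 ∧ ∀ S T : Finset (Fin n), S ⊆ T → u S ≤ u T

/-- The Shapley weight `w_S = |S|! (n - |S| - 1)! / n!`. -/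
noncomputable def shapleyWeight (n : ℕ) (S : Finset (Fin n)) : ℝ :=
  ((S.card.factorial * (n - S.card - 1).factorial : ℕ) : ℝ) / (n.factorial : ℝ)

/-- The Shapley value solution `φ_i(u) = ∑_{S ⊆ N \ {i}} w_S (u (S ∪ {i}) - u S)`. -/
noncomputable def shapley {n : ℕ} (u : Finset (Fin n) → ℝ) (i : Fin n) : ℝ :=
  ∑ S ∈ (Finset.univ.erase i).powerset, shapleyWeight n S * (u (insert i S) - u S)

/-!
Two solutions `ψ`, `φ` satisfying PO, ETP and M (the Shapley value is one) agree on every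
monotone game `u`. Write `u` through its Harsanyi dividends, `u S = ∑_{T ⊆ S} d_T`, and induct on
the number of synergies, the coalitions of at least two players with nonzero dividend: the
marginal contributions of a player `j` only involve `d_{j}` and the synergies containing `j`.

If player `i` misses a synergy `T`, delete it; monotonicity, which this may break, is restored by
adding `|d_T|` to the singleton dividends of the members of `T`. Neither change touches the
marginal contributions of `i`, so M and the induction hypothesis give `ψ_i(u) = φ_i(u)`.

If `i` lies in every synergy, set the singleton dividends to `d_{i}` on the intersection `C` of the
synergies and to a large constant off `C`. The new game is monotone, has the same synergies and
the same marginal contributions of `i`, and the players of `C` are symmetric in it. The players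
off `C` fall under the first case, so PO and ETP force agreement on `C`, in particular at `i`.
-/

namespace TUGame

section Dividends

variable {α β : Type*} [CommRing β]

def dividend (u : Finset α → β) (T : Finset α) : β :=
  ∑ S ∈ T.powerset, (-1) ^ (T.card + S.card) * u S

def ofDividends (d : Finset α → β) (S : Finset α) : β :=
  ∑ T ∈ S.powerset, d T

@[simp]
theorem dividend_empty (u : Finset α → β) : dividend u ∅ = u ∅ := by
  simp [dividend]

@[simp]
theorem ofDividends_empty (d : Finset α → β) : ofDividends d ∅ = d ∅ := by
  simp [ofDividends]

theorem sum_Icc_neg_one_pow_card [DecidableEq α] {S T : Finset α} (h : S ⊆ T) :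
    ∑ U ∈ Icc S T, (-1 : β) ^ U.card = if S = T then (-1) ^ T.card else 0 := by
  have hdisj : ∀ A ∈ (T \ S).powerset, Disjoint S A := fun A hA =>
    disjoint_sdiff.mono_right (mem_powerset.1 hA)
  rw [Icc_eq_image_powerset h, sum_image fun A hA B hB hAB => by
    rw [← union_sdiff_cancel_left (hdisj A hA), hAB, union_sdiff_cancel_left (hdisj B hB)]]
  calc ∑ A ∈ (T \ S).powerset, (-1 : β) ^ (S ∪ A).card
      = (-1) ^ S.card * ∑ A ∈ (T \ S).powerset, (-1 : β) ^ A.card := by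
        rw [mul_sum]
        exact sum_congr rfl fun A hA => by rw [card_union_of_disjoint (hdisj A hA), pow_add]
    _ = (-1) ^ S.card * if T \ S = ∅ then 1 else 0 := by
        exact_mod_cast congrArg (fun z : ℤ => (-1 : β) ^ S.card * z) sum_powerset_neg_one_pow_card
    _ = if S = T then (-1) ^ T.card else 0 := by
        by_cases hST : S = T
        · simp [hST]
        · simp [hST, show ¬T ⊆ S from fun h' => hST (h.antisymm h')]

theorem sum_powerset_sum_powerset {M : Type*} [AddCommMonoid M] [DecidableEq α] (S : Finset α)
    (f : Finset α → Finset α → M) :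
    ∑ T ∈ S.powerset, ∑ U ∈ T.powerset, f T U = ∑ U ∈ S.powerset, ∑ T ∈ Icc U S, f T U :=
  sum_comm' fun T U => by
    simp only [mem_powerset, mem_Icc]
    exact ⟨fun h => ⟨⟨h.2, h.1⟩, h.2.trans h.1⟩, fun h => ⟨h.1.2, h.1.1⟩⟩

theorem ofDividends_dividend [DecidableEq α] (u : Finset α → β) : ofDividends (dividend u) = u := by
  funext S
  simp only [ofDividends, dividend]
  rw [sum_powerset_sum_powerset]
  calc ∑ U ∈ S.powerset, ∑ T ∈ Icc U S, (-1 : β) ^ (T.card + U.card) * u U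
      = ∑ U ∈ S.powerset, (∑ T ∈ Icc U S, (-1 : β) ^ T.card) * ((-1) ^ U.card * u U) := by
        simp only [sum_mul, pow_add, mul_assoc]
    _ = u S := by
        rw [sum_eq_single_of_mem S (mem_powerset_self S) fun U hU hUS => by
          rw [sum_Icc_neg_one_pow_card (mem_powerset.1 hU), if_neg hUS, zero_mul]]
        rw [sum_Icc_neg_one_pow_card subset_rfl, if_pos rfl, ← mul_assoc, ← pow_add,
          Even.neg_one_pow ⟨_, rfl⟩, one_mul]

theorem dividend_ofDividends [DecidableEq α] (d : Finset α → β) : dividend (ofDividends d) = d := by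
  funext T
  simp only [ofDividends, dividend, mul_sum]
  rw [sum_powerset_sum_powerset]
  calc ∑ U ∈ T.powerset, ∑ S ∈ Icc U T, (-1 : β) ^ (T.card + S.card) * d U
      = ∑ U ∈ T.powerset, (∑ S ∈ Icc U T, (-1 : β) ^ S.card) * ((-1) ^ T.card * d U) := by
        simp only [sum_mul, pow_add]
        exact sum_congr rfl fun _ _ => sum_congr rfl fun _ _ => by ring
    _ = d T := by
        rw [sum_eq_single_of_mem T (mem_powerset_self T) fun U hU hUT => by
          rw [sum_Icc_neg_one_pow_card (mem_powerset.1 hU), if_neg hUT, zero_mul]]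
        rw [sum_Icc_neg_one_pow_card subset_rfl, if_pos rfl, ← mul_assoc, ← pow_add,
          Even.neg_one_pow ⟨_, rfl⟩, one_mul]

theorem ofDividends_insert_sub [DecidableEq α] (d : Finset α → β) {j : α} {S : Finset α}
    (hj : j ∉ S) :
    ofDividends d (insert j S) - ofDividends d S = ∑ T ∈ S.powerset, d (insert j T) := by
  rw [ofDividends, ofDividends, sum_powerset_insert hj, add_sub_cancel_left]

theorem dividend_singleton [DecidableEq α] (u : Finset α → β) (j : α) :
    dividend u {j} = u {j} - u ∅ := by
  simpa [ofDividends_dividend] using (ofDividends_insert_sub (dividend u) (notMem_empty j)).symm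

end Dividends

section Synergies

variable {α β : Type*} [Fintype α] [DecidableEq β]

def synergies [Zero β] (d : Finset α → β) : Finset (Finset α) :=
  {U | 2 ≤ U.card ∧ d U ≠ 0}

theorem mem_synergies [Zero β] {d : Finset α → β} {U : Finset α} :
    U ∈ synergies d ↔ 2 ≤ U.card ∧ d U ≠ 0 := by
  simp [synergies]

theorem synergies_congr [Zero β] {d d' : Finset α → β} (h : ∀ U, 2 ≤ U.card → d U = d' U) :
    synergies d = synergies d' := by
  ext U
  simp only [mem_synergies]
  exact ⟨fun hU => ⟨hU.1, h U hU.1 ▸ hU.2⟩, fun hU => ⟨hU.1, (h U hU.1).symm ▸ hU.2⟩⟩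

theorem synergies_update_zero [Zero β] [DecidableEq α] (d : Finset α → β) (T : Finset α) :
    synergies (Function.update d T 0) = (synergies d).erase T := by
  ext U
  by_cases hU : U = T
  · simp [hU, mem_synergies]
  · simp [mem_synergies, hU]

theorem sum_powerset_insert_eq_add_sum_synergies [AddCommMonoid β] [DecidableEq α]
    (d : Finset α → β) {j : α} {S : Finset α} (hj : j ∉ S) :
    ∑ T ∈ S.powerset, d (insert j T) =
      d {j} + ∑ U ∈ synergies d with j ∈ U ∧ U ⊆ insert j S, d U := by
  rw [← add_sum_erase _ _ (empty_mem_powerset S), insert_empty_eq]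
  congr 1
  refine sum_bij_ne_zero (fun T _ _ => insert j T) ?_ ?_ ?_ fun _ _ _ => rfl
  · intro T hT hd
    rw [mem_erase, mem_powerset] at hT
    have hjT : j ∉ T := fun h => hj (hT.2 h)
    rw [mem_filter, mem_synergies, card_insert_of_notMem hjT]
    exact ⟨⟨by have := (nonempty_iff_ne_empty.2 hT.1).card_pos; omega, hd⟩,
      mem_insert_self j T, insert_subset_insert j hT.2⟩
  · intro T₁ hT₁ _ T₂ hT₂ _ h
    rw [mem_erase, mem_powerset] at hT₁ hT₂
    rw [← erase_insert fun h' => hj (hT₁.2 h'), h, erase_insert fun h' => hj (hT₂.2 h')]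
  · intro U hU hd
    rw [mem_filter, mem_synergies] at hU
    refine ⟨U.erase j, ?_, by rwa [insert_erase hU.2.1], insert_erase hU.2.1⟩
    rw [mem_erase, mem_powerset, ne_eq, ← card_eq_zero, card_erase_of_mem hU.2.1]
    exact ⟨by omega, by simpa [subset_insert_iff] using hU.2.2⟩

theorem ofDividends_insert_sub_eq_add_sum [CommRing β] [DecidableEq α] (d : Finset α → β)
    {j : α} {S : Finset α} (hj : j ∉ S) :
    ofDividends d (insert j S) - ofDividends d S =
      d {j} + ∑ U ∈ synergies d with j ∈ U ∧ U ⊆ insert j S, d U := by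
  rw [ofDividends_insert_sub d hj, sum_powerset_insert_eq_add_sum_synergies d hj]

theorem insert_sub_eq_dividend_add_sum [CommRing β] [DecidableEq α] (u : Finset α → β)
    {j : α} {S : Finset α} (hj : j ∉ S) :
    u (insert j S) - u S =
      dividend u {j} + ∑ U ∈ synergies (dividend u) with j ∈ U ∧ U ⊆ insert j S, dividend u U :=
  by simpa [ofDividends_dividend] using ofDividends_insert_sub_eq_add_sum (dividend u) hj

theorem filter_synergies_of_mem_inf [Zero β] [DecidableEq α] {d : Finset α → β} {j : α}
    (hj : j ∈ (synergies d).inf id) (X : Finset α) :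
    {U ∈ synergies d | j ∈ U ∧ U ⊆ X} = {U ∈ synergies d | U ⊆ X} :=
  filter_congr fun U hU => by simp [show j ∈ U from mem_inf.1 hj U hU]

theorem filter_synergies_subset_eq_empty [Zero β] [DecidableEq α] {d : Finset α → β} {k : α}
    (hk : k ∈ (synergies d).inf id) {X : Finset α} (hkX : k ∉ X) :
    {U ∈ synergies d | U ⊆ X} = ∅ :=
  filter_eq_empty_iff.2 fun U hU hUX => hkX (hUX (mem_inf.1 hk U hU))

def withSingletons (d s : Finset α → β) (U : Finset α) : β :=
  if U.card = 1 then s U else d U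

theorem synergies_withSingletons [Zero β] (d s : Finset α → β) :
    synergies (withSingletons d s) = synergies d :=
  synergies_congr fun _ hU => if_neg (by omega)

theorem ofDividends_withSingletons_insert_sub [CommRing β] [DecidableEq α] (d s : Finset α → β)
    {j : α} {S : Finset α} (hj : j ∉ S) :
    ofDividends (withSingletons d s) (insert j S) - ofDividends (withSingletons d s) S =
      s {j} + ∑ U ∈ synergies d with j ∈ U ∧ U ⊆ insert j S, d U := by
  rw [ofDividends_insert_sub_eq_add_sum _ hj, synergies_withSingletons, withSingletons,
    if_pos (card_singleton j)]
  exact congrArg _ (sum_congr rfl fun U hU =>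
    if_neg (by have := (mem_synergies.1 (mem_filter.1 hU).1).1; omega))

end Synergies

theorem map_swap_eq_self {α : Type*} [DecidableEq α] {i j : α} {R : Finset α}
    (h : i ∈ R ↔ j ∈ R) : R.map (Equiv.swap i j).toEmbedding = R := by
  ext x
  rw [mem_map_equiv, Equiv.symm_swap]
  rcases eq_or_ne x i with rfl | hxi
  · rw [Equiv.swap_apply_left, h]
  rcases eq_or_ne x j with rfl | hxj
  · rw [Equiv.swap_apply_right, h]
  · rw [Equiv.swap_apply_of_ne_of_ne hxi hxj]

theorem apply_map_swap_of_symmetric {α β : Type*} [DecidableEq α] [AddCommGroup β]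
    {u : Finset α → β} {i j : α}
    (h : ∀ S, i ∉ S → j ∉ S → u (insert i S) - u S = u (insert j S) - u S) (R : Finset α) :
    u (R.map (Equiv.swap i j).toEmbedding) = u R := by
  have hswap : ∀ S : Finset α, i ∉ S → j ∉ S →
      (insert i S).map (Equiv.swap i j).toEmbedding = insert j S ∧
      (insert j S).map (Equiv.swap i j).toEmbedding = insert i S := fun S hi hj => by
    simp [map_insert, map_swap_eq_self (iff_of_false hi hj)]
  by_cases hij : i ∈ R ↔ j ∈ R
  · rw [map_swap_eq_self hij]
  by_cases hi : i ∈ R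
  · have hj : j ∉ R := fun hj => hij (iff_of_true hi hj)
    have hjS : j ∉ R.erase i := fun h' => hj (mem_of_mem_erase h')
    rw [← insert_erase hi, (hswap _ (notMem_erase i R) hjS).1]
    exact (sub_left_inj.1 (h _ (notMem_erase i R) hjS)).symm
  · have hj : j ∈ R := by tauto
    have hiS : i ∉ R.erase j := fun h' => hi (mem_of_mem_erase h')
    rw [← insert_erase hj, (hswap _ hiS (notMem_erase j R)).2]
    exact sub_left_inj.1 (h _ hiS (notMem_erase j R))

variable {n : ℕ}

theorem isMonotoneGame_of_insert_sub_nonneg {u : Finset (Fin n) → ℝ} (h0 : u ∅ = 0)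
    (h : ∀ j S, j ∉ S → 0 ≤ u (insert j S) - u S) : IsMonotoneGame n u :=
  ⟨h0, Finset.monotone_iff_forall_le_cons.2 fun S j hj => by
    rw [cons_eq_insert]
    linarith [h j S hj]⟩

theorem exists_monotone_synergies_eq_erase {u : Finset (Fin n) → ℝ} (hu : IsMonotoneGame n u)
    {T : Finset (Fin n)} (hT : T ∈ synergies (dividend u)) {i : Fin n} (hi : i ∉ T) :
    ∃ v, IsMonotoneGame n v ∧ synergies (dividend v) = (synergies (dividend u)).erase T ∧
      ∀ S, u (insert i S) - u S = v (insert i S) - v S := by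
  set d := dividend u
  set c := d T
  set v := ofDividends <| withSingletons (Function.update d T 0) fun U =>
    if U ⊆ T then d U + |c| else d U
  have hmarg : ∀ j S, j ∉ S → v (insert j S) - v S =
      u (insert j S) - u S + (if j ∈ T then |c| else 0) -
        (if j ∈ T ∧ T ⊆ insert j S then c else 0) := by
    intro j S hj
    rw [ofDividends_withSingletons_insert_sub _ _ hj, insert_sub_eq_dividend_add_sum u hj,
      synergies_update_zero, filter_erase,
      sum_congr rfl fun U hU => Function.update_of_ne (ne_of_mem_erase hU) _ _]
    have hsingle : (if {j} ⊆ T then d {j} + |c| else d {j}) = d {j} + if j ∈ T then |c| else 0 :=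
      by by_cases hjT : j ∈ T <;> simp [hjT]
    rw [hsingle]
    by_cases hp : j ∈ T ∧ T ⊆ insert j S
    · rw [if_pos hp, sum_erase_eq_sub (mem_filter.2 ⟨hT, hp⟩)]
      ring
    · have hT' : T ∉ {U ∈ synergies d | j ∈ U ∧ U ⊆ insert j S} := fun h => hp (mem_filter.1 h).2
      rw [if_neg hp, erase_eq_of_notMem hT']
      ring
  refine ⟨v, isMonotoneGame_of_insert_sub_nonneg ?_ fun j S hj => ?_, ?_, fun S => ?_⟩
  · have hT0 : (∅ : Finset (Fin n)) ≠ T := fun h => by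
      simpa [← h] using (mem_synergies.1 hT).1
    simp [v, withSingletons, hT0, d, hu.1]
  · have hu' := hu.2 _ _ (subset_insert j S)
    rw [hmarg j S hj]
    by_cases hp : j ∈ T ∧ T ⊆ insert j S
    · rw [if_pos hp.1, if_pos hp]
      linarith [le_abs_self c]
    · rw [if_neg hp]
      split_ifs <;> linarith [abs_nonneg c]
  · rw [dividend_ofDividends, synergies_withSingletons, synergies_update_zero]
  · by_cases hiS : i ∈ S
    · simp [insert_eq_of_mem hiS]
    · simp [hmarg i S hiS, hi]

theorem exists_monotone_synergies_eq_symmetric {u : Finset (Fin n) → ℝ}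
    (hu : IsMonotoneGame n u) {i : Fin n} (hi : i ∈ (synergies (dividend u)).inf id) :
    ∃ v, IsMonotoneGame n v ∧ synergies (dividend v) = synergies (dividend u) ∧
      (∀ S, u (insert i S) - u S = v (insert i S) - v S) ∧
      ∀ j ∈ (synergies (dividend u)).inf id, ∀ k ∈ (synergies (dividend u)).inf id, ∀ S,
        j ∉ S → k ∉ S → v (insert j S) - v S = v (insert k S) - v S := by
  set d := dividend u
  set K := synergies d
  set C := K.inf id
  set a := d {i}
  set v := ofDividends <| withSingletons d fun U => if U ⊆ C then a else a + ∑ U ∈ K, |d U|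
  have ha : 0 ≤ a := by
    simpa [a, d, dividend_singleton, hu.1] using hu.2 _ _ (empty_subset {i})
  have hmarg : ∀ j S, j ∉ S → v (insert j S) - v S =
      (if j ∈ C then a else a + ∑ U ∈ K, |d U|) + ∑ U ∈ K with j ∈ U ∧ U ⊆ insert j S, d U :=
    fun j S hj => by simp [v, ofDividends_withSingletons_insert_sub _ _ hj, K]
  have hmarg_eq : ∀ j ∈ C, ∀ k ∈ C, ∀ S, j ∉ S → k ∉ insert j S → v (insert j S) - v S = a :=
    fun j hj k hk S hjS hkS => by
      rw [hmarg j S hjS, if_pos hj, filter_synergies_of_mem_inf hj,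
        filter_synergies_subset_eq_empty hk hkS, sum_empty, add_zero]
  refine ⟨v, isMonotoneGame_of_insert_sub_nonneg ?_ fun j S hj => ?_,
    by rw [dividend_ofDividends, synergies_withSingletons], fun S => ?_,
    fun j hj k hk S hjS hkS => ?_⟩
  · simp [v, withSingletons, d, hu.1]
  · by_cases hjC : j ∈ C
    · by_cases hiX : i ∈ insert j S
      · -- `j`'s marginal contribution to `S` in `v` is `i`'s to `(insert j S).erase i` in `u`
        set S' := (insert j S).erase i
        have hS' : insert i S' = insert j S := insert_erase hiX
        have hu' := hu.2 _ _ (subset_insert i S')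
        rw [hmarg j S hj, if_pos hjC, filter_synergies_of_mem_inf hjC, ← hS',
          ← filter_synergies_of_mem_inf hi, ← insert_sub_eq_dividend_add_sum u (notMem_erase i _)]
        linarith
      · rw [hmarg_eq j hjC i hi S hj hiX]
        exact ha
    · have hbound : |∑ U ∈ K with j ∈ U ∧ U ⊆ insert j S, d U| ≤ ∑ U ∈ K, |d U| :=
        (abs_sum_le_sum_abs _ _).trans
          (sum_le_sum_of_subset_of_nonneg (filter_subset _ _) fun _ _ _ => abs_nonneg _)
      rw [hmarg j S hj, if_neg hjC]
      linarith [neg_abs_le (∑ U ∈ K with j ∈ U ∧ U ⊆ insert j S, d U)]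
  · by_cases hiS : i ∈ S
    · simp [insert_eq_of_mem hiS]
    · rw [hmarg i S hiS, if_pos hi, insert_sub_eq_dividend_add_sum u hiS]
  · rcases eq_or_ne j k with rfl | hjk
    · rfl
    rw [hmarg_eq j hj k hk S hjS (by simp [hjk.symm, hkS]),
      hmarg_eq k hk j hj S hkS (by simp [hjk, hjS])]

def ParetoOptimal (ψ : (Finset (Fin n) → ℝ) → Fin n → ℝ) : Prop :=
  ∀ u, IsMonotoneGame n u → ∑ i, ψ u i = u Finset.univ

def EqualTreatment (ψ : (Finset (Fin n) → ℝ) → Fin n → ℝ) : Prop :=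
  ∀ u, IsMonotoneGame n u → ∀ i j : Fin n,
    (∀ S : Finset (Fin n), i ∉ S → j ∉ S → u (insert i S) - u S = u (insert j S) - u S) →
    ψ u i = ψ u j

def Marginality (ψ : (Finset (Fin n) → ℝ) → Fin n → ℝ) : Prop :=
  ∀ u v, IsMonotoneGame n u → IsMonotoneGame n v → ∀ i : Fin n,
    (∀ S : Finset (Fin n), u (insert i S) - u S = v (insert i S) - v S) → ψ u i = ψ v i

theorem eq_of_sum_eq_of_eqOn_compl {α K : Type*} [Fintype α] [DecidableEq α] [Field K]
    [CharZero K] {f g : α → K} {C : Finset α} {i : α} (hsum : ∑ j, f j = ∑ j, g j)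
    (hout : ∀ j ∉ C, f j = g j) (hf : ∀ j ∈ C, f j = f i) (hg : ∀ j ∈ C, g j = g i)
    (hi : i ∈ C) : f i = g i := by
  have hsplit : ∀ h : α → K, (∀ j ∈ C, h j = h i) → ∑ j, h j = C.card * h i + ∑ j ∈ Cᶜ, h j :=
    fun h hh => by rw [← sum_add_sum_compl C h, sum_congr rfl hh, sum_const, nsmul_eq_mul]
  rw [hsplit f hf, hsplit g hg, sum_congr rfl fun j hj => hout j (mem_compl.1 hj),
    add_left_inj] at hsum
  exact mul_left_cancel₀ (Nat.cast_ne_zero.2 (card_ne_zero_of_mem hi)) hsum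

noncomputable def shapleyCoeff (i : Fin n) (R : Finset (Fin n)) : ℝ :=
  if i ∈ R then shapleyWeight n (R.erase i) else -shapleyWeight n R

theorem shapley_eq_sum_shapleyCoeff (u : Finset (Fin n) → ℝ) (i : Fin n) :
    shapley u i = ∑ R, shapleyCoeff i R * u R := by
  have hi : i ∉ univ.erase i := notMem_erase i univ
  conv_rhs => rw [← powerset_univ, ← insert_erase (mem_univ i), sum_powerset_insert hi]
  rw [shapley, ← sum_add_distrib]
  refine sum_congr rfl fun S hS => ?_
  have hiS : i ∉ S := fun h => hi (mem_powerset.1 hS h)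
  simp only [shapleyCoeff, hiS, if_false, mem_insert_self, if_true, erase_insert hiS]
  ring

theorem factorial_mul_factorial_add_ite_eq {r : ℕ} (hr : r ≤ n) :
    r * ((r - 1).factorial * (n - (r - 1) - 1).factorial) + (if r = 0 then n.factorial else 0) =
      (n - r) * (r.factorial * (n - r - 1).factorial) + (if r = n then n.factorial else 0) := by
  rcases Nat.eq_zero_or_pos r with rfl | hr0
  · rcases Nat.eq_zero_or_pos n with rfl | hn0
    · simp
    · simp [hn0.ne, Nat.mul_factorial_pred hn0.ne']
  · rcases hr.lt_or_eq with hrn | rfl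
    · rw [if_neg hr0.ne', if_neg hrn.ne, show n - (r - 1) - 1 = n - r by omega, ← mul_assoc,
        Nat.mul_factorial_pred hr0.ne', mul_left_comm, Nat.mul_factorial_pred (by omega)]
    · simp [hr0.ne', show r - (r - 1) - 1 = 0 by omega, Nat.mul_factorial_pred hr0.ne']

theorem sum_shapleyCoeff (R : Finset (Fin n)) :
    ∑ i, shapleyCoeff i R = (if R = univ then 1 else 0) - (if R = ∅ then 1 else 0) := by
  have key := congrArg (Nat.cast : ℕ → ℝ)
    (factorial_mul_factorial_add_ite_eq (n := n) (by simpa using card_le_univ R))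
  have hw : ∀ i ∈ R, shapleyWeight n (R.erase i) =
      (((R.card - 1).factorial * (n - (R.card - 1) - 1).factorial : ℕ) : ℝ) / n.factorial :=
    fun i hi => by rw [shapleyWeight, card_erase_of_mem hi]
  have huniv : R = univ ↔ R.card = n := by simpa using (card_eq_iff_eq_univ R).symm
  simp only [shapleyCoeff]
  rw [sum_ite, sum_congr rfl fun i hi => hw i (mem_filter.1 hi).2]
  simp only [sum_const, filter_mem_eq_inter, univ_inter, filter_not, card_univ_sdiff,
    Fintype.card_fin, nsmul_eq_mul, shapleyWeight, ← card_eq_zero (s := R), huniv]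
  have hfac : (n.factorial : ℝ) ≠ 0 := by positivity
  push_cast at key ⊢
  field_simp
  split_ifs at key ⊢ <;> linarith

theorem sum_shapley (u : Finset (Fin n) → ℝ) : ∑ i, shapley u i = u univ - u ∅ := by
  simp only [shapley_eq_sum_shapleyCoeff]
  rw [sum_comm]
  simp [← sum_mul, sum_shapleyCoeff, sub_mul]

theorem shapleyCoeff_map (σ : Equiv.Perm (Fin n)) (i : Fin n) (R : Finset (Fin n)) :
    shapleyCoeff (σ i) (R.map σ.toEmbedding) = shapleyCoeff i R := by
  by_cases hi : i ∈ R
  · simp [shapleyCoeff, shapleyWeight, hi, card_erase_of_mem]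
  · simp [shapleyCoeff, shapleyWeight, hi]

theorem shapley_comp_map (σ : Equiv.Perm (Fin n)) (u : Finset (Fin n) → ℝ) (i : Fin n) :
    shapley (fun R => u (R.map σ.toEmbedding)) i = shapley u (σ i) := by
  rw [shapley_eq_sum_shapleyCoeff, shapley_eq_sum_shapleyCoeff]
  conv_rhs => rw [← Equiv.sum_comp σ.finsetCongr]
  simp only [Equiv.finsetCongr_apply, shapleyCoeff_map]

theorem shapley_paretoOptimal : ParetoOptimal (@shapley n) := fun u hu => by
  rw [sum_shapley, hu.1, sub_zero]

theorem shapley_eq_of_symmetric {u : Finset (Fin n) → ℝ} {i j : Fin n}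
    (h : ∀ S, i ∉ S → j ∉ S → u (insert i S) - u S = u (insert j S) - u S) :
    shapley u i = shapley u j := by
  conv_lhs => rw [show u = fun R => u (R.map (Equiv.swap i j).toEmbedding) from
    funext fun R => (apply_map_swap_of_symmetric h R).symm]
  rw [shapley_comp_map, Equiv.swap_apply_left]

theorem shapley_equalTreatment : EqualTreatment (@shapley n) := fun _ _ _ _ h =>
  shapley_eq_of_symmetric h

theorem shapley_marginality : Marginality (@shapley n) := fun _ _ _ _ _ h =>
  sum_congr rfl fun S _ => by rw [h S]

section Uniqueness

variable {ψ φ : (Finset (Fin n) → ℝ) → Fin n → ℝ}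

theorem eq_of_notMem_inf_synergies (hψ : Marginality ψ) (hφ : Marginality φ)
    {u : Finset (Fin n) → ℝ} (hu : IsMonotoneGame n u)
    (ih : ∀ w, IsMonotoneGame n w → (synergies (dividend w)).card < (synergies (dividend u)).card →
      ∀ j, ψ w j = φ w j)
    {i : Fin n} (hi : i ∉ (synergies (dividend u)).inf id) : ψ u i = φ u i := by
  obtain ⟨T, hT, hiT⟩ : ∃ T ∈ synergies (dividend u), i ∉ T := by simpa [mem_inf] using hi
  obtain ⟨v, hv, hsyn, hmarg⟩ := exists_monotone_synergies_eq_erase hu hT hiT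
  rw [hψ u v hu hv i hmarg, hφ u v hu hv i hmarg]
  exact ih v hv (hsyn ▸ card_erase_lt_of_mem hT) i

theorem eq_of_mem_inf_synergies (hψPO : ParetoOptimal ψ) (hψET : EqualTreatment ψ)
    (hψM : Marginality ψ) (hφPO : ParetoOptimal φ) (hφET : EqualTreatment φ)
    (hφM : Marginality φ) {u : Finset (Fin n) → ℝ} (hu : IsMonotoneGame n u)
    (ih : ∀ w, IsMonotoneGame n w → (synergies (dividend w)).card < (synergies (dividend u)).card →
      ∀ j, ψ w j = φ w j)
    {i : Fin n} (hi : i ∈ (synergies (dividend u)).inf id) : ψ u i = φ u i := by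
  obtain ⟨v, hv, hsyn, hmarg, hsymm⟩ := exists_monotone_synergies_eq_symmetric hu hi
  have hvi : ψ v i = φ v i := by
    refine eq_of_sum_eq_of_eqOn_compl (by rw [hψPO v hv, hφPO v hv]) (fun j hj => ?_)
      (fun j hj => hψET v hv j i (hsymm j hj i hi)) (fun j hj => hφET v hv j i (hsymm j hj i hi)) hi
    exact eq_of_notMem_inf_synergies hψM hφM hv (hsyn ▸ ih) (hsyn ▸ hj)
  rw [hψM u v hu hv i hmarg, hvi, hφM u v hu hv i hmarg]

theorem eq_of_paretoOptimal_of_equalTreatment_of_marginality (hψPO : ParetoOptimal ψ)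
    (hψET : EqualTreatment ψ) (hψM : Marginality ψ) (hφPO : ParetoOptimal φ)
    (hφET : EqualTreatment φ) (hφM : Marginality φ) {u : Finset (Fin n) → ℝ}
    (hu : IsMonotoneGame n u) (i : Fin n) : ψ u i = φ u i := by
  induction hk : (synergies (dividend u)).card using Nat.strong_induction_on generalizing u i with
  | _ k ih =>
    have ih' : ∀ w, IsMonotoneGame n w →
        (synergies (dividend w)).card < (synergies (dividend u)).card → ∀ j, ψ w j = φ w j :=
      fun w hw hlt j => ih _ (hk ▸ hlt) hw j rfl
    by_cases hi : i ∈ (synergies (dividend u)).inf id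
    · exact eq_of_mem_inf_synergies hψPO hψET hψM hφPO hφET hφM hu ih' hi
    · exact eq_of_notMem_inf_synergies hψM hφM hu ih' hi

end Uniqueness

end TUGame

theorem shapley_uniqueness_marginality_general (n : ℕ)
    (ψ : (Finset (Fin n) → ℝ) → Fin n → ℝ) :
    ((∀ u, IsMonotoneGame n u → ∑ i, ψ u i = u Finset.univ) ∧
     (∀ u, IsMonotoneGame n u → ∀ i j : Fin n,
        (∀ S : Finset (Fin n), i ∉ S → j ∉ S →
          u (insert i S) - u S = u (insert j S) - u S) →
        ψ u i = ψ u j) ∧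
     (∀ u v, IsMonotoneGame n u → IsMonotoneGame n v → ∀ i : Fin n,
        (∀ S : Finset (Fin n), u (insert i S) - u S = v (insert i S) - v S) →
        ψ u i = ψ v i)) ↔
    (∀ u, IsMonotoneGame n u → ∀ i, ψ u i = shapley u i) := by
  constructor
  · rintro ⟨hPO, hET, hM⟩ u hu i
    exact TUGame.eq_of_paretoOptimal_of_equalTreatment_of_marginality hPO hET hM
      TUGame.shapley_paretoOptimal TUGame.shapley_equalTreatment TUGame.shapley_marginality hu i
  · intro h
    refine ⟨fun u hu => ?_, fun u hu i j hij => ?_, fun u v hu hv i huv => ?_⟩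
    · simpa only [h u hu] using TUGame.shapley_paretoOptimal u hu
    · rw [h u hu, h u hu]
      exact TUGame.shapley_equalTreatment u hu i j hij
    · rw [h u hu, h v hv]
      exact TUGame.shapley_marginality u v hu hv i huv

/-- A solution ψ on the class of monotone games satisfies PO (Pareto optimality),
ETP (equal treatment property) and M (marginality) iff ψ is the Shapley value solution. -/
theorem shapley_uniqueness_marginality (n : ℕ) (hn : 1 ≤ n)
    (ψ : (Finset (Fin n) → ℝ) → Fin n → ℝ) :
    ((∀ u, IsMonotoneGame n u → ∑ i, ψ u i = u Finset.univ) ∧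
     (∀ u, IsMonotoneGame n u → ∀ i j : Fin n,
        (∀ S : Finset (Fin n), i ∉ S → j ∉ S →
          u (insert i S) - u S = u (insert j S) - u S) →
        ψ u i = ψ u j) ∧
     (∀ u v, IsMonotoneGame n u → IsMonotoneGame n v → ∀ i : Fin n,
        (∀ S : Finset (Fin n), u (insert i S) - u S = v (insert i S) - v S) →
        ψ u i = ψ v i)) ↔
    (∀ u, IsMonotoneGame n u → ∀ i, ψ u i = shapley u i) :=
  shapley_uniqueness_marginality_general n ψ
end

section
/- A solution ψ on the class of monotone games with agent set N satisfies PO (Pareto optimality), ETP (equal treatment property) and UM (unequal marginality) if and only if ψ is the Shapley value solution φ. -/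
open Finset

/-!
Write a game through its Harsanyi dividends, `u S = ∑ T ⊆ S, a T`, and compare two solutions
satisfying PO, ETP and UM by strong induction on the number of interaction coalitions, those `T`
with `2 ≤ #T` and `a T ≠ 0`. By UM the payoff of a player depends only on her marginal
contributions, that is, on the dividends of the coalitions containing her.

If player `l` misses some interaction coalition, drop every dividend of a coalition without `l`
and give each other player a singleton dividend large enough to keep the game monotone: `l`'s
payoff does not change and there are fewer interaction coalitions. If `i` lies in every
interaction coalition, give every such player (the core) the singleton dividend of `i`. This
leaves `i`'s payoff unchanged and makes the core players substitutes of `i`; the other players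
are settled by the first case, so PO determines the common payoff of the core.
-/

open scoped Nat

section Dividends

variable {α : Type*}

def dividendGame (a : Finset α → ℝ) (S : Finset α) : ℝ := ∑ T ∈ S.powerset, a T

lemma dividendGame_empty (a : Finset α → ℝ) : dividendGame a ∅ = a ∅ := by
  simp [dividendGame]

variable [DecidableEq α]

lemma dividendGame_insert_sub (a : Finset α → ℝ) {l : α} {S : Finset α} (hl : l ∉ S) :
    dividendGame a (insert l S) - dividendGame a S = ∑ T ∈ S.powerset, a (insert l T) := by
  rw [dividendGame, sum_powerset_insert hl, dividendGame, add_sub_cancel_left]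

lemma dividendGame_insert_sub_congr {a b : Finset α → ℝ} {l : α}
    (h : ∀ T, l ∈ T → a T = b T) (S : Finset α) :
    dividendGame a (insert l S) - dividendGame a S =
      dividendGame b (insert l S) - dividendGame b S := by
  by_cases hl : l ∈ S
  · rw [insert_eq_of_mem hl, sub_self, sub_self]
  · rw [dividendGame_insert_sub a hl, dividendGame_insert_sub b hl]
    exact sum_congr rfl fun T _ => h _ (mem_insert_self l T)

theorem dividendGame_injective : Function.Injective (dividendGame (α := α)) := by
  intro a b h
  funext T
  rw [IncidenceAlgebra.moebius_inversion_bot a (dividendGame a)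
      (fun S => by rw [Iic_eq_powerset]; rfl),
    IncidenceAlgebra.moebius_inversion_bot b (dividendGame b)
      (fun S => by rw [Iic_eq_powerset]; rfl), h]

variable [Fintype α]

theorem dividendGame_surjective : Function.Surjective (dividendGame (α := α)) := by
  let L : (Finset α → ℝ) →ₗ[ℝ] Finset α → ℝ :=
    LinearMap.pi fun S => ∑ T ∈ S.powerset, LinearMap.proj T
  have hL : ⇑L = dividendGame := by
    funext a S
    simp [L, dividendGame]
  rw [← hL]
  exact LinearMap.injective_iff_surjective.1 (hL ▸ dividendGame_injective)

lemma sum_powerset_abs_insert_le (a : Finset α → ℝ) {l : α} {S : Finset α} (hl : l ∉ S) :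
    ∑ T ∈ S.powerset, |a (insert l T)| ≤ ∑ T, |a T| :=
  calc _ ≤ ∑ T ∈ S.powerset, |a T| + ∑ T ∈ S.powerset, |a (insert l T)| :=
        le_add_of_nonneg_left (sum_nonneg fun _ _ => abs_nonneg _)
    _ = ∑ T ∈ (insert l S).powerset, |a T| := (sum_powerset_insert hl _).symm
    _ ≤ ∑ T, |a T| := sum_le_univ_sum_of_nonneg fun _ => abs_nonneg _

noncomputable def interactionSupport (a : Finset α → ℝ) : Finset (Finset α) :=
  {T | 2 ≤ #T ∧ a T ≠ 0}

noncomputable def interactionCore (a : Finset α → ℝ) : Finset α :=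
  {l | ∀ T ∈ interactionSupport a, l ∈ T}

lemma exists_mem_interactionSupport_notMem {a : Finset α → ℝ} {l : α}
    (hl : l ∉ interactionCore a) : ∃ T ∈ interactionSupport a, l ∉ T := by
  simpa [interactionCore] using hl

/-- The singleton dividend `∑ R, |a R|` outweighs every negative dividend, so monotonicity is
preserved. -/
noncomputable def focus (a : Finset α → ℝ) (l : α) (T : Finset α) : ℝ :=
  if l ∈ T then a T else if #T = 1 then ∑ R, |a R| else 0

lemma focus_of_mem {a : Finset α → ℝ} {l : α} {T : Finset α} (h : l ∈ T) :
    focus a l T = a T :=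
  if_pos h

lemma interactionSupport_focus_subset {a : Finset α → ℝ} {l : α} {T₀ : Finset α}
    (hl : l ∉ T₀) : interactionSupport (focus a l) ⊆ (interactionSupport a).erase T₀ := by
  intro T hT
  simp only [interactionSupport, mem_filter, mem_univ, true_and] at hT
  have hlT : l ∈ T := by
    by_contra hlT
    exact hT.2 (by rw [focus, if_neg hlT, if_neg (by omega)])
  refine mem_erase.2 ⟨fun h => hl (h ▸ hlT), ?_⟩
  simpa [interactionSupport, focus_of_mem hlT] using hT

lemma sum_powerset_focus_insert_nonneg (a : Finset α → ℝ) {j l : α} (hjl : j ≠ l)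
    {S : Finset α} (hj : j ∉ S) : 0 ≤ ∑ T ∈ S.powerset, focus a l (insert j T) := by
  have hM : 0 ≤ ∑ R, |a R| := sum_nonneg fun _ _ => abs_nonneg _
  have hfocus : ∀ R, -|a R| ≤ focus a l R := fun R => by
    simp only [focus]
    split_ifs <;> linarith [neg_abs_le (a R), abs_nonneg (a R)]
  rw [← add_sum_erase _ _ (empty_mem_powerset S), insert_empty, focus,
    if_neg (notMem_singleton.2 hjl.symm), if_pos (card_singleton j)]
  calc (0 : ℝ) ≤ ∑ R, |a R| - ∑ T ∈ S.powerset, |a (insert j T)| :=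
        sub_nonneg.2 (sum_powerset_abs_insert_le a hj)
    _ ≤ ∑ R, |a R| - ∑ T ∈ S.powerset.erase ∅, |a (insert j T)| := by
        gcongr
        exact erase_subset _ _
    _ ≤ ∑ R, |a R| + ∑ T ∈ S.powerset.erase ∅, focus a l (insert j T) := by
        rw [sub_eq_add_neg, ← sum_neg_distrib]
        gcongr with T
        exact hfocus _

noncomputable def equalizeCore (a : Finset α → ℝ) (i : α) (T : Finset α) : ℝ :=
  if #T = 1 ∧ T ⊆ interactionCore a then a {i} else a T

lemma interactionSupport_equalizeCore (a : Finset α → ℝ) (i : α) :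
    interactionSupport (equalizeCore a i) = interactionSupport a := by
  ext T
  simp only [interactionSupport, mem_filter, mem_univ, true_and]
  exact and_congr_right fun h => by rw [equalizeCore, if_neg (by omega)]

lemma equalizeCore_of_mem {a : Finset α → ℝ} {i l : α} {T : Finset α} (hlT : l ∈ T)
    (hl : l ∈ interactionCore a → l = i) : equalizeCore a i T = a T := by
  rw [equalizeCore]
  split_ifs with h
  · obtain ⟨x, rfl⟩ := card_eq_one.1 h.1
    obtain rfl := mem_singleton.1 hlT
    rw [hl (h.2 (mem_singleton_self l))]
  · rfl

lemma dividendGame_equalizeCore_insert_sub {a : Finset α → ℝ} {i l m : α}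
    (hl : l ∈ interactionCore a) (hm : m ∈ interactionCore a) (hlm : l ≠ m) {S : Finset α}
    (hlS : l ∉ S) (hmS : m ∉ S) :
    dividendGame (equalizeCore a i) (insert l S) - dividendGame (equalizeCore a i) S = a {i} := by
  rw [dividendGame_insert_sub _ hlS, sum_eq_single_of_mem ∅ (empty_mem_powerset S)]
  · rw [insert_empty, equalizeCore, if_pos ⟨card_singleton l, singleton_subset_iff.2 hl⟩]
  · intro T hT hTne
    have hTS := mem_powerset.1 hT
    have hcard : 2 ≤ #(insert l T) := by
      rw [card_insert_of_notMem fun h => hlS (hTS h)]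
      have := (nonempty_iff_ne_empty.2 hTne).card_pos
      omega
    rw [equalizeCore, if_neg fun h => by omega]
    by_contra hne
    have hmT := (mem_filter.1 hm).2 _ (mem_filter.2 ⟨mem_univ _, hcard, hne⟩)
    exact hmS (hTS ((mem_insert.1 hmT).resolve_left (Ne.symm hlm)))

lemma dividendGame_equalizeCore_insert_sub_eq {a : Finset α → ℝ} {i l : α}
    (hi : i ∈ interactionCore a) (hl : l ∈ interactionCore a) {S : Finset α} (hlS : l ∉ S)
    (hiS : i ∉ S) :
    dividendGame (equalizeCore a i) (insert l S) - dividendGame (equalizeCore a i) S =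
      dividendGame (equalizeCore a i) (insert i S) - dividendGame (equalizeCore a i) S := by
  rcases eq_or_ne l i with rfl | hli
  · rfl
  rw [dividendGame_equalizeCore_insert_sub hl hi hli hlS hiS,
    dividendGame_equalizeCore_insert_sub hi hl hli.symm hiS hlS]

end Dividends

section Swap

variable {α : Type*} [DecidableEq α]

lemma image_swap_eq_self {i j : α} {S : Finset α} (h : i ∈ S ↔ j ∈ S) :
    S.image (Equiv.swap i j) = S := by
  refine eq_of_subset_of_card_le (image_subset_iff.2 fun x hx => ?_)
    (card_image_of_injective _ (Equiv.injective _)).ge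
  rw [Equiv.swap_apply_def]
  split_ifs <;> subst_vars <;> tauto

lemma insert_sub_eq_image_swap {u : Finset α → ℝ} {i j : α}
    (h : ∀ S, i ∉ S → j ∉ S → u (insert i S) - u S = u (insert j S) - u S)
    {S : Finset α} (hi : i ∉ S) :
    u (insert j (S.image (Equiv.swap i j))) - u (S.image (Equiv.swap i j)) =
      u (insert i S) - u S := by
  by_cases hj : j ∈ S
  · have hR : i ∉ S.erase j := fun h => hi (mem_of_mem_erase h)
    have hsub := h (S.erase j) hR (notMem_erase j S)
    rw [← insert_erase hj, image_insert, Equiv.swap_apply_right,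
      image_swap_eq_self (iff_of_false hR (notMem_erase j S)), insert_comm]
    linarith
  · rw [image_swap_eq_self (iff_of_false hi hj)]
    exact (h S hi hj).symm

end Swap

lemma sum_powerset_univ_erase_insert {α M : Type*} [DecidableEq α] [Fintype α] [AddCommMonoid M]
    (i : α) (f : Finset α → M) :
    ∑ S ∈ (univ.erase i).powerset, f (insert i S) = ∑ T, if i ∈ T then f T else 0 := by
  have h := sum_powerset_insert (notMem_erase i univ) fun T => if i ∈ T then f T else 0
  rw [insert_erase (mem_univ i), powerset_univ] at h
  rw [h, sum_eq_zero fun S hS => if_neg (notMem_of_mem_powerset_of_notMem hS (notMem_erase i univ)),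
    zero_add]
  exact sum_congr rfl fun S _ => (if_pos (mem_insert_self i S)).symm

lemma apply_eq_apply_of_sum_eq {ι : Type*} [Fintype ι] {f g : ι → ℝ} {D : Finset ι} {i : ι}
    (hi : i ∈ D) (hsum : ∑ l, f l = ∑ l, g l) (hout : ∀ l ∉ D, f l = g l)
    (hf : ∀ l ∈ D, f l = f i) (hg : ∀ l ∈ D, g l = g i) : f i = g i := by
  have h : (#D : ℝ) * (f i - g i) = 0 :=
    calc _ = ∑ l ∈ D, (f l - g l) := by
          rw [sum_congr rfl fun l hl => by rw [hf l hl, hg l hl], sum_const, nsmul_eq_mul]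
      _ = ∑ l, (f l - g l) := sum_subset (subset_univ D) fun l _ hl => sub_eq_zero.2 (hout l hl)
      _ = 0 := by rw [sum_sub_distrib, hsum, sub_self]
  exact sub_eq_zero.1 ((mul_eq_zero.1 h).resolve_left (Nat.cast_ne_zero.2 (card_ne_zero_of_mem hi)))

section Shapley

variable {n : ℕ}

lemma shapley_eq_shapley_of_substitutes {u : Finset (Fin n) → ℝ} {i j : Fin n}
    (h : ∀ S, i ∉ S → j ∉ S → u (insert i S) - u S = u (insert j S) - u S) :
    shapley u i = shapley u j := by
  have hpow : (univ.erase j).powerset =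
      (univ.erase i).powerset.image (image (Equiv.swap i j)) := by
    rw [← powerset_image, image_erase (Equiv.injective _), image_univ_equiv,
      Equiv.swap_apply_left]
  rw [shapley, shapley, hpow, sum_image (image_injective (Equiv.injective _)).injOn]
  refine sum_congr rfl fun S hS => ?_
  rw [shapleyWeight, shapleyWeight, Finset.card_image_of_injective _ (Equiv.injective _),
    insert_sub_eq_image_swap h (subset_erase.1 (mem_powerset.1 hS)).2]

lemma shapley_le_shapley {u v : Finset (Fin n) → ℝ} {i : Fin n}
    (h : ∀ S, v (insert i S) - v S ≤ u (insert i S) - u S) : shapley v i ≤ shapley u i :=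
  sum_le_sum fun S _ => mul_le_mul_of_nonneg_left (h S) (by unfold shapleyWeight; positivity)

lemma sum_shapleyWeight_erase {T : Finset (Fin n)} (hT : T.Nonempty) :
    ∑ i ∈ T, shapleyWeight n (T.erase i) = ((#T)! * (n - #T)! : ℕ) / (n ! : ℝ) := by
  have h1 : 1 ≤ #T := hT.card_pos
  rw [sum_congr rfl fun i hi => by rw [shapleyWeight, card_erase_of_mem hi], sum_const,
    nsmul_eq_mul, ← mul_div_assoc, ← Nat.cast_mul, ← mul_assoc,
    Nat.mul_factorial_pred (by omega), show n - (#T - 1) - 1 = n - #T by omega]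

lemma card_compl_mul_shapleyWeight {S : Finset (Fin n)} (hS : S ≠ univ) :
    #Sᶜ * shapleyWeight n S = ((#S)! * (n - #S)! : ℕ) / (n ! : ℝ) := by
  have hlt : #S < n := by simpa using (card_lt_iff_ne_univ S).2 hS
  rw [card_compl, Fintype.card_fin, shapleyWeight, ← mul_div_assoc, ← Nat.cast_mul,
    mul_left_comm, Nat.mul_factorial_pred (by omega)]

theorem sum_shapley {u : Finset (Fin n) → ℝ} (h0 : u ∅ = 0) :
    ∑ i, shapley u i = u univ := by
  -- `q S = 1 / (n choose #S)`: both double sums below weigh every `u T` by it, except that the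
  -- first one misses `u ∅ = 0` and the second one misses `u univ`.
  set q : Finset (Fin n) → ℝ := fun S => ((#S)! * (n - #S)! : ℕ) / (n ! : ℝ)
  have hjoin : ∑ i, ∑ S ∈ (univ.erase i).powerset, shapleyWeight n S * u (insert i S) =
      ∑ T, q T * u T := by
    calc _ = ∑ i, ∑ T, if i ∈ T then shapleyWeight n (T.erase i) * u T else 0 := by
          refine sum_congr rfl fun i _ => ?_
          rw [← sum_powerset_univ_erase_insert]
          refine sum_congr rfl fun S hS => ?_
          rw [erase_insert (subset_erase.1 (mem_powerset.1 hS)).2]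
      _ = ∑ T, (∑ i ∈ T, shapleyWeight n (T.erase i)) * u T := by
          rw [sum_comm]
          refine sum_congr rfl fun T _ => ?_
          rw [sum_mul, ← sum_filter, filter_mem_eq_inter, univ_inter]
      _ = ∑ T, q T * u T := by
          refine sum_congr rfl fun T _ => ?_
          rcases T.eq_empty_or_nonempty with rfl | hT
          · simp [h0]
          · rw [sum_shapleyWeight_erase hT]
  have hstay : ∑ i, ∑ S ∈ (univ.erase i).powerset, shapleyWeight n S * u S =
      ∑ S, q S * u S - u univ := by
    calc _ = ∑ S, ∑ i ∈ Sᶜ, shapleyWeight n S * u S :=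
          sum_comm' fun i S => by simp [subset_erase]
      _ = ∑ S, (q S * u S - if S = univ then u S else 0) := by
          refine sum_congr rfl fun S _ => ?_
          rw [sum_const, nsmul_eq_mul, ← mul_assoc]
          split_ifs with hS
          · simp [hS, q, Nat.factorial_ne_zero]
          · rw [card_compl_mul_shapleyWeight hS, sub_zero]
      _ = ∑ S, q S * u S - u univ := by
          rw [sum_sub_distrib, sum_ite_eq', if_pos (mem_univ _)]
  simp only [shapley, mul_sub, sum_sub_distrib, hjoin, hstay, sub_sub_cancel]

end Shapley

section Solutions

variable {n : ℕ}

lemma IsMonotoneGame.insert_sub_nonneg {u : Finset (Fin n) → ℝ} (hu : IsMonotoneGame n u)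
    (l : Fin n) (S : Finset (Fin n)) : 0 ≤ u (insert l S) - u S :=
  sub_nonneg.2 (hu.2 _ _ (subset_insert l S))

lemma isMonotoneGame_of_insert_sub_nonneg {u : Finset (Fin n) → ℝ} (h0 : u ∅ = 0)
    (h : ∀ l S, l ∉ S → 0 ≤ u (insert l S) - u S) : IsMonotoneGame n u :=
  ⟨h0, monotone_iff_forall_le_insert.2 fun S l hl => sub_nonneg.1 (h l S hl)⟩

lemma isMonotoneGame_focus {a : Finset (Fin n) → ℝ} (ha : IsMonotoneGame n (dividendGame a))
    (l : Fin n) : IsMonotoneGame n (dividendGame (focus a l)) := by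
  refine isMonotoneGame_of_insert_sub_nonneg (by simp [dividendGame_empty, focus]) fun j S hj => ?_
  rcases eq_or_ne j l with rfl | hjl
  · rw [← dividendGame_insert_sub_congr fun T hT => (focus_of_mem hT).symm]
    exact ha.insert_sub_nonneg j S
  · rw [dividendGame_insert_sub _ hj]
    exact sum_powerset_focus_insert_nonneg a hjl hj

lemma isMonotoneGame_equalizeCore {a : Finset (Fin n) → ℝ}
    (ha : IsMonotoneGame n (dividendGame a)) {i : Fin n} (hi : i ∈ interactionCore a) :
    IsMonotoneGame n (dividendGame (equalizeCore a i)) := by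
  refine isMonotoneGame_of_insert_sub_nonneg ?_ fun l S hlS => ?_
  · simpa [dividendGame_empty, equalizeCore] using ha.1
  by_cases hl : l ∈ interactionCore a
  · -- `l` contributes to `S` what its substitute `i` contributes to the swapped coalition
    rw [← insert_sub_eq_image_swap (fun _ => dividendGame_equalizeCore_insert_sub_eq hi hl) hlS,
      ← dividendGame_insert_sub_congr fun T hT => (equalizeCore_of_mem hT fun _ => rfl).symm]
    exact ha.insert_sub_nonneg _ _
  · rw [← dividendGame_insert_sub_congr fun T hT =>
      (equalizeCore_of_mem hT (absurd · hl)).symm]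
    exact ha.insert_sub_nonneg _ _

def ParetoOptimal (ψ : (Finset (Fin n) → ℝ) → Fin n → ℝ) : Prop :=
  ∀ u, IsMonotoneGame n u → ∑ i, ψ u i = u univ

def EqualTreatment (ψ : (Finset (Fin n) → ℝ) → Fin n → ℝ) : Prop :=
  ∀ u, IsMonotoneGame n u → ∀ i j : Fin n,
    (∀ S : Finset (Fin n), i ∉ S → j ∉ S →
      u (insert i S) - u S = u (insert j S) - u S) →
    ψ u i = ψ u j

def UnequalMarginality (ψ : (Finset (Fin n) → ℝ) → Fin n → ℝ) : Prop :=
  ∀ u v, IsMonotoneGame n u → IsMonotoneGame n v → ∀ i : Fin n,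
    (∀ S : Finset (Fin n), u (insert i S) - u S ≥ v (insert i S) - v S) → ψ u i ≥ ψ v i

lemma UnequalMarginality.apply_eq {ψ : (Finset (Fin n) → ℝ) → Fin n → ℝ}
    (hψ : UnequalMarginality ψ) {u v : Finset (Fin n) → ℝ} (hu : IsMonotoneGame n u)
    (hv : IsMonotoneGame n v) {i : Fin n}
    (h : ∀ S, u (insert i S) - u S = v (insert i S) - v S) : ψ u i = ψ v i :=
  le_antisymm (hψ v u hv hu i fun S => (h S).le) (hψ u v hu hv i fun S => (h S).ge)

lemma paretoOptimal_shapley : ParetoOptimal (shapley (n := n)) :=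
  fun _ hu => sum_shapley hu.1

lemma equalTreatment_shapley : EqualTreatment (shapley (n := n)) :=
  fun _ _ _ _ h => shapley_eq_shapley_of_substitutes h

lemma unequalMarginality_shapley : UnequalMarginality (shapley (n := n)) :=
  fun _ _ _ _ _ h => shapley_le_shapley h

section Uniqueness

variable {ψ χ : (Finset (Fin n) → ℝ) → Fin n → ℝ} {a : Finset (Fin n) → ℝ}

lemma apply_eq_of_notMem_interactionCore (hψ : UnequalMarginality ψ)
    (hχ : UnequalMarginality χ) (ha : IsMonotoneGame n (dividendGame a))
    (ih : ∀ b, IsMonotoneGame n (dividendGame b) →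
      #(interactionSupport b) < #(interactionSupport a) →
        ψ (dividendGame b) = χ (dividendGame b))
    {l : Fin n} (hl : l ∉ interactionCore a) :
    ψ (dividendGame a) l = χ (dividendGame a) l := by
  obtain ⟨T₀, hT₀, hlT₀⟩ := exists_mem_interactionSupport_notMem hl
  have hb := isMonotoneGame_focus ha l
  have hmarg := dividendGame_insert_sub_congr (a := a) (l := l) fun _ hT => (focus_of_mem hT).symm
  have hlt : #(interactionSupport (focus a l)) < #(interactionSupport a) :=
    (card_le_card (interactionSupport_focus_subset hlT₀)).trans_lt (card_erase_lt_of_mem hT₀)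
  calc ψ (dividendGame a) l = ψ (dividendGame (focus a l)) l := hψ.apply_eq ha hb hmarg
    _ = χ (dividendGame (focus a l)) l := congrFun (ih _ hb hlt) l
    _ = χ (dividendGame a) l := (hχ.apply_eq ha hb hmarg).symm

lemma apply_eq_of_mem_interactionCore
    (hψ : ParetoOptimal ψ ∧ EqualTreatment ψ ∧ UnequalMarginality ψ)
    (hχ : ParetoOptimal χ ∧ EqualTreatment χ ∧ UnequalMarginality χ)
    (ha : IsMonotoneGame n (dividendGame a))
    (ih : ∀ b, IsMonotoneGame n (dividendGame b) →
      #(interactionSupport b) < #(interactionSupport a) →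
        ψ (dividendGame b) = χ (dividendGame b))
    {i : Fin n} (hi : i ∈ interactionCore a) :
    ψ (dividendGame a) i = χ (dividendGame a) i := by
  set b := equalizeCore a i
  have hsupp : interactionSupport b = interactionSupport a := interactionSupport_equalizeCore a i
  have hcore : interactionCore b = interactionCore a := by rw [interactionCore, hsupp]; rfl
  have hmarg : ∀ S, dividendGame a (insert i S) - dividendGame a S =
      dividendGame b (insert i S) - dividendGame b S :=
    dividendGame_insert_sub_congr fun T hT => (equalizeCore_of_mem hT fun _ => rfl).symm
  have hb := isMonotoneGame_equalizeCore ha hi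
  have hout : ∀ l ∉ interactionCore a, ψ (dividendGame b) l = χ (dividendGame b) l :=
    fun l hl => apply_eq_of_notMem_interactionCore hψ.2.2 hχ.2.2 hb (hsupp ▸ ih) (hcore ▸ hl)
  calc ψ (dividendGame a) i = ψ (dividendGame b) i := hψ.2.2.apply_eq ha hb hmarg
    _ = χ (dividendGame b) i :=
        apply_eq_apply_of_sum_eq hi (by rw [hψ.1 _ hb, hχ.1 _ hb]) hout
          (fun l hl => hψ.2.1 _ hb l i fun _ => dividendGame_equalizeCore_insert_sub_eq hi hl)
          (fun l hl => hχ.2.1 _ hb l i fun _ => dividendGame_equalizeCore_insert_sub_eq hi hl)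
    _ = χ (dividendGame a) i := (hχ.2.2.apply_eq ha hb hmarg).symm

theorem eq_of_paretoOptimal_equalTreatment_unequalMarginality
    (hψ : ParetoOptimal ψ ∧ EqualTreatment ψ ∧ UnequalMarginality ψ)
    (hχ : ParetoOptimal χ ∧ EqualTreatment χ ∧ UnequalMarginality χ)
    {u : Finset (Fin n) → ℝ} (hu : IsMonotoneGame n u) : ψ u = χ u := by
  obtain ⟨a, rfl⟩ := dividendGame_surjective u
  obtain ⟨k, hk⟩ : ∃ k, #(interactionSupport a) = k := ⟨_, rfl⟩
  induction k using Nat.strong_induction_on generalizing a with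
  | _ k IH =>
  have ih : ∀ b, IsMonotoneGame n (dividendGame b) →
      #(interactionSupport b) < #(interactionSupport a) →
        ψ (dividendGame b) = χ (dividendGame b) :=
    fun b hb hlt => IH _ (hk ▸ hlt) b hb rfl
  funext i
  by_cases hi : i ∈ interactionCore a
  · exact apply_eq_of_mem_interactionCore hψ hχ hu ih hi
  · exact apply_eq_of_notMem_interactionCore hψ.2.2 hχ.2.2 hu ih hi

end Uniqueness

end Solutions

theorem shapley_uniqueness_unequal_marginality_general (n : ℕ)
    (ψ : (Finset (Fin n) → ℝ) → Fin n → ℝ) :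
    ((∀ u, IsMonotoneGame n u → ∑ i, ψ u i = u Finset.univ) ∧
     (∀ u, IsMonotoneGame n u → ∀ i j : Fin n,
        (∀ S : Finset (Fin n), i ∉ S → j ∉ S →
          u (insert i S) - u S = u (insert j S) - u S) →
        ψ u i = ψ u j) ∧
     (∀ u v, IsMonotoneGame n u → IsMonotoneGame n v → ∀ i : Fin n,
        (∀ S : Finset (Fin n), u (insert i S) - u S ≥ v (insert i S) - v S) →
        ψ u i ≥ ψ v i)) ↔
    (∀ u, IsMonotoneGame n u → ∀ i, ψ u i = shapley u i) := by
  constructor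
  · intro h u hu i
    exact congrFun (eq_of_paretoOptimal_equalTreatment_unequalMarginality h
      ⟨paretoOptimal_shapley, equalTreatment_shapley, unequalMarginality_shapley⟩ hu) i
  · intro h
    refine ⟨fun u hu => ?_, fun u hu i j hij => ?_, fun u v hu hv i huv => ?_⟩
    · simp only [h u hu]
      exact paretoOptimal_shapley u hu
    · rw [h u hu, h u hu]
      exact equalTreatment_shapley u hu i j hij
    · rw [h u hu, h v hv]
      exact unequalMarginality_shapley u v hu hv i huv

/-- A solution ψ on the class of monotone games satisfies PO (Pareto optimality),
ETP (equal treatment property) and UM (unequal marginality) iff ψ is the Shapley value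
solution. -/
theorem shapley_uniqueness_unequal_marginality (n : ℕ) (hn : 1 ≤ n)
    (ψ : (Finset (Fin n) → ℝ) → Fin n → ℝ) :
    ((∀ u, IsMonotoneGame n u → ∑ i, ψ u i = u Finset.univ) ∧
     (∀ u, IsMonotoneGame n u → ∀ i j : Fin n,
        (∀ S : Finset (Fin n), i ∉ S → j ∉ S →
          u (insert i S) - u S = u (insert j S) - u S) →
        ψ u i = ψ u j) ∧
     (∀ u v, IsMonotoneGame n u → IsMonotoneGame n v → ∀ i : Fin n,
        (∀ S : Finset (Fin n), u (insert i S) - u S ≥ v (insert i S) - v S) →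
        ψ u i ≥ ψ v i)) ↔
    (∀ u, IsMonotoneGame n u → ∀ i, ψ u i = shapley u i) :=
  shapley_uniqueness_unequal_marginality_general n ψ
end

section
/- Let Δ be a monotone game and let β ∈ ℝⁿ be a maximizer of ∑_{i ∈ N} β'_i over all β' ∈ ℝⁿ satisfying ∑_{i ∈ S} β'_i ≤ Δ(S) for every S ⊆ N (a Minimal Ex-post Rational blame assignment). Then β satisfies: (validity) ∑_{i ∈ N} β_i ≤ Δ(N); (rationality) ∑_{i ∈ S} β_i ≤ Δ(S) for every S ⊆ N; and (invariance) β_i = 0 for every agent i such that Δ(S ∪ {i}) = Δ(S) for every S ⊆ N. -/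
open Finset

/-!
Validity and rationality are feasibility itself. For invariance, let `i` be a null player.
Then `β i ≤ Δ {i} = Δ ∅ = 0`. Conversely, setting `β i` to `0` keeps every constraint:
the constraint for `S ∋ i` becomes the one for `S \ {i}`, whose value is the same. So
maximality gives `∑ β - β i ≤ ∑ β`, i.e. `0 ≤ β i`.
-/

section BlameAssignment

variable {ι : Type*} (u : Finset ι → ℝ)

def IsRationalAssignment (β : ι → ℝ) : Prop :=
  ∀ S : Finset ι, ∑ j ∈ S, β j ≤ u S

def IsNullPlayer [DecidableEq ι] (i : ι) : Prop :=
  ∀ S : Finset ι, u (insert i S) = u S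

variable {u}

theorem IsRationalAssignment.update_null_zero [DecidableEq ι] {β : ι → ℝ}
    (hβ : IsRationalAssignment u β) {i : ι} (hi : IsNullPlayer u i) :
    IsRationalAssignment u (Function.update β i 0) := by
  intro S
  by_cases hiS : i ∈ S
  · calc ∑ j ∈ S, Function.update β i 0 j = ∑ j ∈ S.erase i, β j := by
          rw [sum_update_of_mem hiS, zero_add, sdiff_singleton_eq_erase]
      _ ≤ u (S.erase i) := hβ _
      _ = u S := by rw [← hi, insert_erase hiS]
  · rw [sum_update_of_notMem hiS]
    exact hβ S

theorem IsNullPlayer.eq_zero_of_maximal [DecidableEq ι] [Fintype ι] (h₀ : u ∅ = 0)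
    {β : ι → ℝ} (hβ : IsRationalAssignment u β)
    (hmax : ∀ β', IsRationalAssignment u β' → ∑ j, β' j ≤ ∑ j, β j)
    {i : ι} (hi : IsNullPlayer u i) : β i = 0 := by
  have hle : β i ≤ 0 := by
    have := hβ {i}
    rwa [sum_singleton, ← LawfulSingleton.insert_empty_eq, hi, h₀] at this
  have hge := hmax _ (hβ.update_null_zero hi)
  rw [sum_update_of_mem (mem_univ i), zero_add,
    sum_eq_add_sum_sdiff_singleton_of_mem (mem_univ i)] at hge
  linarith

end BlameAssignment

theorem mer_validity_rationality_invariance_general (n : ℕ)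
    (Δ : Finset (Fin n) → ℝ) (hΔ : IsMonotoneGame n Δ)
    (β : Fin n → ℝ)
    (hfeas : ∀ S : Finset (Fin n), ∑ i ∈ S, β i ≤ Δ S)
    (hmax : ∀ β' : Fin n → ℝ,
      (∀ S : Finset (Fin n), ∑ i ∈ S, β' i ≤ Δ S) → ∑ i, β' i ≤ ∑ i, β i) :
    (∑ i, β i ≤ Δ Finset.univ) ∧
    (∀ S : Finset (Fin n), ∑ i ∈ S, β i ≤ Δ S) ∧
    (∀ i : Fin n, (∀ S : Finset (Fin n), Δ (insert i S) = Δ S) → β i = 0) :=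
  ⟨hfeas univ, hfeas, fun _ hi => IsNullPlayer.eq_zero_of_maximal hΔ.1 hfeas hmax hi⟩

/-- Any Minimal Ex-post Rational blame assignment (a maximizer of total blame subject to the
ex-post rationality constraints) satisfies validity, rationality and invariance. -/
theorem mer_validity_rationality_invariance (n : ℕ) (hn : 1 ≤ n)
    (Δ : Finset (Fin n) → ℝ) (hΔ : IsMonotoneGame n Δ)
    (β : Fin n → ℝ)
    (hfeas : ∀ S : Finset (Fin n), ∑ i ∈ S, β i ≤ Δ S)
    (hmax : ∀ β' : Fin n → ℝ,
      (∀ S : Finset (Fin n), ∑ i ∈ S, β' i ≤ Δ S) → ∑ i, β' i ≤ ∑ i, β i) :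
    (∑ i, β i ≤ Δ Finset.univ) ∧
    (∀ S : Finset (Fin n), ∑ i ∈ S, β i ≤ Δ S) ∧
    (∀ i : Fin n, (∀ S : Finset (Fin n), Δ (insert i S) = Δ S) → β i = 0) :=
  mer_validity_rationality_invariance_general n Δ hΔ β hfeas hmax
end

section
/- For n = 2 agents there is no solution ψ on the class of monotone games satisfying simultaneously: (efficiency) ∑_{i ∈ N} ψ_i(u) = u(N) for every monotone game u; (symmetry) ψ_i(u) = ψ_j(u) whenever u(S ∪ {i}) = u(S ∪ {j}) for every S ⊆ N \ {i, j}; (invariance) ψ_i(u) = 0 whenever u(S ∪ {i}) = u(S) for every S ⊆ N; and (performance monotonicity) ψ_i(u) ≥ ψ_i(v) for all monotone games u, v and every agent i with u({i}) ≥ v({i}). -/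
open Finset

/-- Impossibility: for `n = 2` agents, no solution on the class of monotone games satisfies
efficiency, symmetry, invariance and performance monotonicity simultaneously. -/
theorem no_solution_efficiency_symmetry_invariance_perfMono
    (ψ : (Finset (Fin 2) → ℝ) → Fin 2 → ℝ) :
    ¬ ((∀ u, IsMonotoneGame 2 u → ∑ i, ψ u i = u Finset.univ) ∧
       (∀ u, IsMonotoneGame 2 u → ∀ i j : Fin 2,
          (∀ S : Finset (Fin 2), i ∉ S → j ∉ S → u (insert i S) = u (insert j S)) →
          ψ u i = ψ u j) ∧
       (∀ u, IsMonotoneGame 2 u → ∀ i : Fin 2,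
          (∀ S : Finset (Fin 2), u (insert i S) = u S) → ψ u i = 0) ∧
       (∀ u v, IsMonotoneGame 2 u → IsMonotoneGame 2 v → ∀ i : Fin 2,
          u {i} ≥ v {i} → ψ u i ≥ ψ v i)) := by
  rintro ⟨heff, -, -, hmono⟩
  -- game w: 1 on the grand coalition, 0 elsewhere; game z: identically 0
  set w : Finset (Fin 2) → ℝ := fun S => if S = Finset.univ then 1 else 0 with hw
  set z : Finset (Fin 2) → ℝ := fun _ => 0 with hz
  have hwM : IsMonotoneGame 2 w := by
    constructor
    · simp [hw, Finset.ext_iff]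
    · intro S T hST
      by_cases hS : S = Finset.univ
      · have : T = Finset.univ := Finset.univ_subset_iff.mp (hS ▸ hST)
        simp [hw, hS, this]
      · by_cases hT : T = Finset.univ <;> simp [hw, hS, hT]
  have hzM : IsMonotoneGame 2 z := ⟨rfl, fun _ _ _ => le_refl 0⟩
  have hsing : ∀ i : Fin 2, w {i} = z {i} := by
    intro i
    have : ({i} : Finset (Fin 2)) ≠ Finset.univ := by
      intro h
      have := congrArg Finset.card h
      simp at this
    simp [hw, hz, this]
  have heq : ∀ i : Fin 2, ψ w i = ψ z i := fun i =>
    le_antisymm (hmono z w hzM hwM i ((hsing i).le))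
      (hmono w z hwM hzM i ((hsing i).ge))
  have h1 : ∑ i, ψ w i = 1 := by simpa [hw] using heff w hwM
  have h0 : ∑ i, ψ z i = 0 := by simpa [hz] using heff z hzM
  rw [Finset.sum_congr rfl (fun i _ => heq i), h0] at h1
  exact one_ne_zero h1.symm
end

section
/- The average participation solution AP satisfies average efficiency: for every game u with u(∅) = 0, ∑_{i ∈ N} AP_i(u) = (1/(2ⁿ − 1)) · ∑_{S ⊆ N} u(S). -/
open Finset
open scoped Classical

/-- The contribution indicator: `c(u,i) = 0` if `u (S ∪ {i}) = u S` for every `S`,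
and `c(u,i) = 1` otherwise. -/
noncomputable def contrib {n : ℕ} (u : Finset (Fin n) → ℝ) (i : Fin n) : ℝ :=
  if ∀ S : Finset (Fin n), u (insert i S) = u S then 0 else 1

/-- The average participation solution
`AP_i(u) = ∑_{S ⊆ N \ {i}} w ⬝ (c(u,i) / (∑_{j ∈ S} c(u,j) + 1)) ⬝ u (S ∪ {i})`,
where `w = 1 / (2 ^ n - 1)`. -/
noncomputable def AP {n : ℕ} (u : Finset (Fin n) → ℝ) (i : Fin n) : ℝ :=
  ∑ S ∈ (Finset.univ.erase i).powerset,
    (1 / (2 ^ n - 1 : ℝ)) * (contrib u i / ((∑ j ∈ S, contrib u j) + 1)) * u (insert i S)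

lemma contrib_zero_or_one {n : ℕ} (u : Finset (Fin n) → ℝ) (i : Fin n) :
    contrib u i = 0 ∨ contrib u i = 1 := by
  unfold contrib; split <;> simp

lemma contrib_nonneg {n : ℕ} (u : Finset (Fin n) → ℝ) (i : Fin n) :
    0 ≤ contrib u i := by
  rcases contrib_zero_or_one u i with h | h <;> rw [h] <;> norm_num

lemma null_zero {n : ℕ} (u : Finset (Fin n) → ℝ) (hu : u ∅ = 0)
    (T : Finset (Fin n)) (h : ∀ i ∈ T, contrib u i = 0) : u T = 0 := by
  induction T using Finset.induction_on with
  | empty => exact hu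
  | @insert a T ha ih =>
    have h0 : contrib u a = 0 := h a (mem_insert_self a T)
    have : ∀ S : Finset (Fin n), u (insert a S) = u S := by
      by_contra hc
      simp [contrib, hc] at h0
    rw [this T]
    exact ih (fun i hi => h i (mem_insert_of_mem hi))


/-- The average participation solution satisfies average efficiency. -/
theorem ap_average_efficiency (n : ℕ) (hn : 1 ≤ n)
    (u : Finset (Fin n) → ℝ) (hu : u ∅ = 0) :
    ∑ i, AP u i =
      (1 / (2 ^ n - 1 : ℝ)) * ∑ S ∈ (Finset.univ : Finset (Fin n)).powerset, u S := by
  set w : ℝ := 1 / (2 ^ n - 1 : ℝ) with hw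
  have key : ∑ i, AP u i
      = ∑ T ∈ (Finset.univ : Finset (Fin n)).powerset, ∑ i ∈ T,
          w * (contrib u i / ((∑ j ∈ T.erase i, contrib u j) + 1)) * u T := by
    unfold AP
    rw [← hw, Finset.sum_sigma', Finset.sum_sigma']
    refine Finset.sum_nbij' (fun p => ⟨insert p.1 p.2, p.1⟩) (fun q => ⟨q.2, q.1.erase q.2⟩)
      ?_ ?_ ?_ ?_ ?_
    · rintro ⟨i, S⟩ hp
      simp only [Finset.mem_sigma, Finset.mem_powerset] at hp ⊢
      exact ⟨Finset.subset_univ _, Finset.mem_insert_self _ _⟩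
    · rintro ⟨T, i⟩ hq
      simp only [Finset.mem_sigma, Finset.mem_powerset, Finset.mem_univ, true_and] at hq ⊢
      exact Finset.erase_subset_erase _ (Finset.subset_univ _)
    · rintro ⟨i, S⟩ hp
      simp only [Finset.mem_sigma, Finset.mem_powerset, Finset.mem_univ, true_and] at hp
      have hiS : i ∉ S := fun h => (Finset.mem_erase.1 (hp h)).1 rfl
      simp [Finset.erase_insert hiS]
    · rintro ⟨T, i⟩ hq
      simp only [Finset.mem_sigma, Finset.mem_powerset, Finset.mem_univ, true_and] at hq
      simp [Finset.insert_erase hq.2]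
    · rintro ⟨i, S⟩ hp
      simp only [Finset.mem_sigma, Finset.mem_powerset, Finset.mem_univ, true_and] at hp
      have hiS : i ∉ S := fun h => (Finset.mem_erase.1 (hp h)).1 rfl
      simp [Finset.erase_insert hiS]
  rw [key, Finset.mul_sum]
  refine Finset.sum_congr rfl fun T _ => ?_
  by_cases hT : ∀ i ∈ T, contrib u i = 0
  · rw [null_zero u hu T hT]
    refine (Finset.sum_eq_zero fun i hi => ?_).trans (by ring)
    simp [hT i hi]
  · push_neg at hT
    obtain ⟨i₀, hi₀, hc₀⟩ := hT
    set m : ℝ := ∑ j ∈ T, contrib u j with hm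
    have hc₀' : contrib u i₀ = 1 := (contrib_zero_or_one u i₀).resolve_left hc₀
    have hm1 : 1 ≤ m := by
      rw [hm, ← hc₀']
      exact Finset.single_le_sum (fun j _ => contrib_nonneg u j) hi₀
    have hm0 : m ≠ 0 := by linarith
    have hterm : ∀ i ∈ T,
        w * (contrib u i / ((∑ j ∈ T.erase i, contrib u j) + 1)) * u T
          = w / m * contrib u i * u T := by
      intro i hi
      rcases contrib_zero_or_one u i with h | h
      · simp [h]
      · have : (∑ j ∈ T.erase i, contrib u j) + contrib u i = m := by
          rw [hm]; exact Finset.sum_erase_add T _ hi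
        rw [h] at this ⊢
        rw [← this]
        ring
    rw [Finset.sum_congr rfl hterm, ← Finset.sum_mul, ← Finset.mul_sum, ← hm]
    field_simp
end

section
/- The average participation solution AP satisfies symmetry: for every game u with u(∅) = 0 and all agents i, j, if u(S ∪ {i}) = u(S ∪ {j}) for every S ⊆ N \ {i, j}, then AP_i(u) = AP_j(u). -/
open Finset
open scoped Classical

/-
The transposition `σ = (i j)` is a symmetry of the game, `u (σ S) = u S`: a coalition containing
exactly one of `i`, `j` is sent to the one with that agent exchanged for the other, and any other
coalition is fixed. Contribution indicators, and hence `AP`, are invariant under relabelling the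
agents by a symmetry of the game, so `AP u j = AP u (σ i) = AP u i`.
-/
theorem Finset.map_swap_eq_self {α : Type*} [DecidableEq α] {i j : α} {A : Finset α}
    (h : i ∈ A ↔ j ∈ A) : A.map (Equiv.swap i j).toEmbedding = A := by
  ext x
  rw [mem_map_equiv, Equiv.symm_swap, Equiv.swap_apply_def]
  split_ifs with hxi hxj
  · subst hxi; exact h.symm
  · subst hxj; exact h
  · rfl

section Swap

variable {α β : Type*} [DecidableEq α] (u : Finset α → β) {i j : α}

theorem apply_map_swap_eq_of_mem_of_notMem
    (h : ∀ S : Finset α, i ∉ S → j ∉ S → u (insert i S) = u (insert j S))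
    {A : Finset α} (hi : i ∈ A) (hj : j ∉ A) :
    u (A.map (Equiv.swap i j).toEmbedding) = u A := by
  set T := A.erase i
  have hiT : i ∉ T := notMem_erase i A
  have hjT : j ∉ T := fun hjT => hj (mem_of_mem_erase hjT)
  rw [← insert_erase hi, map_insert, Equiv.coe_toEmbedding, Equiv.swap_apply_left,
    map_swap_eq_self (iff_of_false hiT hjT)]
  exact (h T hiT hjT).symm

theorem apply_map_swap_eq (h : ∀ S : Finset α, i ∉ S → j ∉ S → u (insert i S) = u (insert j S))
    (A : Finset α) : u (A.map (Equiv.swap i j).toEmbedding) = u A := by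
  by_cases hi : i ∈ A <;> by_cases hj : j ∈ A
  · rw [map_swap_eq_self (iff_of_true hi hj)]
  · exact apply_map_swap_eq_of_mem_of_notMem u h hi hj
  · rw [Equiv.swap_comm]
    exact apply_map_swap_eq_of_mem_of_notMem u (fun S hj hi => (h S hi hj).symm) hj hi
  · rw [map_swap_eq_self (iff_of_false hi hj)]

end Swap

section Symmetry

variable {n : ℕ} {u : Finset (Fin n) → ℝ} {σ : Equiv.Perm (Fin n)}

theorem contrib_perm (hσ : ∀ S, u (S.map σ.toEmbedding) = u S) (k : Fin n) :
    contrib u (σ k) = contrib u k := by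
  have hnull : (∀ S, u (insert k S) = u S) ↔ ∀ S, u (insert (σ k) S) = u S := by
    refine σ.finsetCongr.forall_congr fun S => ?_
    rw [Equiv.finsetCongr_apply, ← Equiv.coe_toEmbedding, ← map_insert, hσ, hσ]
  simp only [contrib, hnull]

theorem AP_perm (hσ : ∀ S, u (S.map σ.toEmbedding) = u S) (k : Fin n) :
    AP u (σ k) = AP u k := by
  refine (sum_equiv σ.finsetCongr (fun S => ?_) fun S _ => ?_).symm
  · simp [subset_erase]
  · rw [Equiv.finsetCongr_apply, sum_map, ← Equiv.coe_toEmbedding, ← map_insert, hσ]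
    simp only [Equiv.coe_toEmbedding, contrib_perm hσ]

end Symmetry

theorem ap_symmetry_general (n : ℕ)
    (u : Finset (Fin n) → ℝ) (i j : Fin n)
    (h : ∀ S : Finset (Fin n), i ∉ S → j ∉ S → u (insert i S) = u (insert j S)) :
    AP u i = AP u j := by
  simpa only [Equiv.swap_apply_left] using (AP_perm (apply_map_swap_eq u h) i).symm

/-- The average participation solution satisfies symmetry. -/
theorem ap_symmetry (n : ℕ) (hn : 1 ≤ n)
    (u : Finset (Fin n) → ℝ) (hu : u ∅ = 0) (i j : Fin n)
    (h : ∀ S : Finset (Fin n), i ∉ S → j ∉ S → u (insert i S) = u (insert j S)) :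
    AP u i = AP u j :=
  ap_symmetry_general n u i j h
end

section
/- The average participation solution AP satisfies c-participation monotonicity: for all games u, v with u(∅) = v(∅) = 0 such that c(u, j) = c(v, j) for every agent j, and every agent i such that u(S ∪ {i}) ≥ v(S ∪ {i}) for every S ⊆ N, it holds that AP_i(u) ≥ AP_i(v). -/
open Finset
open scoped Classical

/-- The average participation solution satisfies c-participation monotonicity. -/
theorem ap_cParM (n : ℕ) (hn : 1 ≤ n)
    (u v : Finset (Fin n) → ℝ) (hu : u ∅ = 0) (hv : v ∅ = 0)
    (hc : ∀ j : Fin n, contrib u j = contrib v j) (i : Fin n)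
    (h : ∀ S : Finset (Fin n), u (insert i S) ≥ v (insert i S)) :
    AP u i ≥ AP v i := by
  unfold AP
  simp only [hc]
  apply Finset.sum_le_sum
  intro S _
  have hw : (0:ℝ) ≤ 1 / (2 ^ n - 1 : ℝ) := by
    apply div_nonneg zero_le_one
    have : (2:ℝ) ≤ 2 ^ n := by
      calc (2:ℝ) = 2 ^ 1 := (pow_one 2).symm
      _ ≤ 2 ^ n := pow_le_pow_right₀ one_le_two hn
    linarith
  have hcn : ∀ (w : Finset (Fin n) → ℝ) j, (0:ℝ) ≤ contrib w j := by
    intro w j; unfold contrib; split <;> norm_num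
  have hcoef : (0:ℝ) ≤ contrib v i / ((∑ j ∈ S, contrib v j) + 1) := by
    apply div_nonneg (hcn v i)
    have : (0:ℝ) ≤ ∑ j ∈ S, contrib v j := Finset.sum_nonneg fun j _ => hcn v j
    linarith
  exact mul_le_mul_of_nonneg_left (h S) (mul_nonneg hw hcoef)
end

section
/- Let u be a monotone game, ε > 0, C₁ = {i ∈ N : c(u, i) = 1}, and let u^ε be the perturbed game defined by u^ε(S) = u(S) + ε if S ∩ C₁ ≠ ∅ and u^ε(S) = u(S) otherwise. Then u^ε is a monotone game and c(u, i) = c(u^ε, i) for every agent i. -/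
open Finset
open scoped Classical

/-- The set `C₁` of agents with contribution indicator `1`. -/
noncomputable def C1 {n : ℕ} (u : Finset (Fin n) → ℝ) : Finset (Fin n) :=
  Finset.univ.filter fun i => contrib u i = 1

/-- The perturbed game `u^ε`: `u^ε S = u S + ε` if `S ∩ C₁ ≠ ∅`, and `u^ε S = u S`
otherwise. -/
noncomputable def perturb {n : ℕ} (u : Finset (Fin n) → ℝ) (ε : ℝ) :
    Finset (Fin n) → ℝ :=
  fun S => if (S ∩ C1 u).Nonempty then u S + ε else u S

/-!
An agent outside `C₁` never changes whether a coalition meets `C₁`, so the perturbation leaves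
its marginal contributions untouched. An agent of `C₁` has some strictly positive marginal
contribution in `u`; adding it to that coalition switches the `ε` bonus on, so the gain stays
strictly positive in `u^ε`.
-/

namespace PerturbedGame

variable {n : ℕ} {u : Finset (Fin n) → ℝ} {ε : ℝ} {i : Fin n}

theorem notMem_C1_iff : i ∉ C1 u ↔ ∀ S, u (insert i S) = u S := by
  by_cases h : ∀ S, u (insert i S) = u S <;> simp [C1, contrib, h]

theorem contrib_eq_contrib_of_iff {v : Finset (Fin n) → ℝ}
    (h : (∀ S, u (insert i S) = u S) ↔ ∀ S, v (insert i S) = v S) :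
    contrib u i = contrib v i := by
  simp only [contrib, h]

theorem perturb_of_inter_C1_nonempty {S : Finset (Fin n)} (hS : (S ∩ C1 u).Nonempty) :
    perturb u ε S = u S + ε :=
  if_pos hS

theorem perturb_le_add (hε : 0 ≤ ε) (S : Finset (Fin n)) : perturb u ε S ≤ u S + ε := by
  unfold perturb
  split_ifs <;> linarith

theorem perturb_monotone (hu : Monotone u) (hε : 0 ≤ ε) : Monotone (perturb u ε) := by
  intro S T hST
  by_cases hS : (S ∩ C1 u).Nonempty
  · have hT : (T ∩ C1 u).Nonempty := hS.mono (inter_subset_inter_right hST)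
    rw [perturb_of_inter_C1_nonempty hS, perturb_of_inter_C1_nonempty hT]
    linarith [hu hST]
  · calc perturb u ε S = u S := if_neg hS
      _ ≤ u T := hu hST
      _ ≤ perturb u ε T := by unfold perturb; split_ifs <;> linarith

theorem perturb_insert_eq_iff_of_notMem_C1 (hi : i ∉ C1 u) (S : Finset (Fin n)) :
    perturb u ε (insert i S) = perturb u ε S ↔ u (insert i S) = u S := by
  simp only [perturb, insert_inter_of_notMem hi]
  split_ifs <;> constructor <;> intro h <;> linarith

theorem perturb_lt_perturb_insert_of_mem_C1 (hu : Monotone u) (hε : 0 ≤ ε) (hi : i ∈ C1 u)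
    {S : Finset (Fin n)} (hS : u (insert i S) ≠ u S) :
    perturb u ε S < perturb u ε (insert i S) := by
  have hlt : u S < u (insert i S) := lt_of_le_of_ne (hu (subset_insert i S)) hS.symm
  calc perturb u ε S ≤ u S + ε := perturb_le_add hε S
    _ < u (insert i S) + ε := by linarith
    _ = perturb u ε (insert i S) :=
      (perturb_of_inter_C1_nonempty ⟨i, mem_inter.mpr ⟨mem_insert_self i S, hi⟩⟩).symm

theorem contrib_perturb (hu : Monotone u) (hε : 0 ≤ ε) (i : Fin n) :
    contrib (perturb u ε) i = contrib u i := by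
  refine contrib_eq_contrib_of_iff ?_
  by_cases hi : i ∈ C1 u
  · obtain ⟨S, hS⟩ : ∃ S, u (insert i S) ≠ u S :=
      not_forall.mp fun h => notMem_C1_iff.mpr h hi
    refine iff_of_false (fun h => ?_) (fun h => hS (h S))
    exact (perturb_lt_perturb_insert_of_mem_C1 hu hε hi hS).ne' (h S)
  · exact forall_congr' (perturb_insert_eq_iff_of_notMem_C1 hi)

end PerturbedGame

open PerturbedGame in
theorem perturb_monotone_and_same_contrib_general (n : ℕ)
    (u : Finset (Fin n) → ℝ) (hu : IsMonotoneGame n u) (ε : ℝ) (hε : 0 < ε) :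
    IsMonotoneGame n (perturb u ε) ∧
    ∀ i : Fin n, contrib u i = contrib (perturb u ε) i := by
  obtain ⟨hempty, hmono⟩ := hu
  exact ⟨⟨by simpa [perturb] using hempty, perturb_monotone hmono hε.le⟩,
    fun i => (contrib_perturb hmono hε.le i).symm⟩

/-- The perturbed game `u^ε` is a monotone game with the same contribution indicators
as `u`. -/
theorem perturb_monotone_and_same_contrib (n : ℕ) (hn : 1 ≤ n)
    (u : Finset (Fin n) → ℝ) (hu : IsMonotoneGame n u) (ε : ℝ) (hε : 0 < ε) :
    IsMonotoneGame n (perturb u ε) ∧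
    ∀ i : Fin n, contrib u i = contrib (perturb u ε) i :=
  perturb_monotone_and_same_contrib_general n u hu ε hε
end

section
/- Let ψ be a solution on the class of monotone games satisfying AE (average efficiency), I (invariance) and RcParM (relative c-participation monotonicity). Let u be a monotone game with C₁ = {i ∈ N : c(u, i) = 1} nonempty, let ε > 0, and let u^ε be the perturbed game defined by u^ε(S) = u(S) + ε if S ∩ C₁ ≠ ∅ and u^ε(S) = u(S) otherwise. Then for every agent i ∈ C₁, ψ_i(u^ε) − ψ_i(u) = (1/|C₁|) · ∑_{S ⊆ N} w · (u^ε(S) − u(S)), where w = 1/(2ⁿ − 1). -/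
open Finset
open scoped Classical

/-! `u^ε - u` equals `ε` on every coalition containing an agent of `C₁`, and `u^ε`
has the same contribution indicators as `u`. Applying RcParM in both directions to two
agents of `C₁` shows that `ψ_i(u^ε) - ψ_i(u)` is the same for all `i ∈ C₁`; by I it vanishes
outside `C₁`, and by AE the differences sum to `∑_S w (u^ε(S) - u(S))`. -/

section Axioms

variable (n : ℕ) (ψ : (Finset (Fin n) → ℝ) → Fin n → ℝ)

def AverageEfficient : Prop :=
  ∀ u, IsMonotoneGame n u →
    ∑ i, ψ u i = (1 / (2 ^ n - 1 : ℝ)) * ∑ S ∈ (Finset.univ : Finset (Fin n)).powerset, u S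

def Invariant : Prop :=
  ∀ u, IsMonotoneGame n u → ∀ i : Fin n, contrib u i = 0 → ψ u i = 0

def RcParMonotone : Prop :=
  ∀ u v, IsMonotoneGame n u → IsMonotoneGame n v →
    (∀ j : Fin n, contrib u j = contrib v j) → ∀ i k : Fin n,
    contrib u i = contrib u k →
    (∀ S : Finset (Fin n), i ∉ S → k ∉ S →
      u (insert i S) - v (insert i S) ≥ u (insert k S) - v (insert k S)) →
    ψ u i - ψ v i ≥ ψ u k - ψ v k

end Axioms

section Contributions

variable {n : ℕ} {u : Finset (Fin n) → ℝ} {i : Fin n}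

lemma mem_C1_iff : i ∈ C1 u ↔ ¬ ∀ S : Finset (Fin n), u (insert i S) = u S := by
  simp [C1, contrib, -not_forall]

lemma contrib_eq_ite : contrib u i = if i ∈ C1 u then 1 else 0 := by
  by_cases h : ∀ S : Finset (Fin n), u (insert i S) = u S <;> simp [mem_C1_iff, contrib, h]

lemma contrib_of_mem_C1 (hi : i ∈ C1 u) : contrib u i = 1 := by
  simp [contrib_eq_ite, hi]

lemma contrib_of_not_mem_C1 (hi : i ∉ C1 u) : contrib u i = 0 := by
  simp [contrib_eq_ite, hi]

end Contributions

section Perturbation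

variable {n : ℕ} {u : Finset (Fin n) → ℝ} {ε : ℝ}

lemma perturb_insert_of_mem_C1 {a : Fin n} (ha : a ∈ C1 u) (S : Finset (Fin n)) :
    perturb u ε (insert a S) = u (insert a S) + ε :=
  if_pos ⟨a, mem_inter.mpr ⟨mem_insert_self a S, ha⟩⟩

lemma perturb_le (hε : 0 ≤ ε) (S : Finset (Fin n)) : perturb u ε S ≤ u S + ε := by
  unfold perturb
  split_ifs <;> linarith

lemma perturb_insert_of_not_mem_C1 {a : Fin n} (ha : a ∉ C1 u) (S : Finset (Fin n)) :
    perturb u ε (insert a S) = perturb u ε S := by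
  have hinter : insert a S ∩ C1 u = S ∩ C1 u := insert_inter_of_notMem ha
  have hnull : u (insert a S) = u S := by
    rw [mem_C1_iff, not_not] at ha
    exact ha S
  simp only [perturb, hinter, hnull]

lemma isMonotoneGame_perturb (hu : IsMonotoneGame n u) (hε : 0 ≤ ε) :
    IsMonotoneGame n (perturb u ε) := by
  refine ⟨by simp [perturb, hu.1], fun S T hST => ?_⟩
  have huST := hu.2 S T hST
  have hmono : (S ∩ C1 u).Nonempty → (T ∩ C1 u).Nonempty :=
    fun h => h.mono (inter_subset_inter_right hST)
  unfold perturb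
  split_ifs with hS hT <;> first | linarith | exact absurd (hmono hS) hT

lemma C1_perturb (hu : IsMonotoneGame n u) (hε : 0 ≤ ε) : C1 (perturb u ε) = C1 u := by
  ext a
  by_cases ha : a ∈ C1 u
  · refine iff_of_true ?_ ha
    obtain ⟨S, hS⟩ := not_forall.mp (mem_C1_iff.mp ha)
    have hlt : u S < u (insert a S) := lt_of_le_of_ne (hu.2 _ _ (subset_insert a S)) (Ne.symm hS)
    refine mem_C1_iff.mpr fun h => ?_
    have heq := h S
    rw [perturb_insert_of_mem_C1 ha] at heq
    linarith [perturb_le (u := u) hε S]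
  · refine iff_of_false (fun h => mem_C1_iff.mp h ?_) ha
    exact perturb_insert_of_not_mem_C1 ha

lemma contrib_perturb (hu : IsMonotoneGame n u) (hε : 0 ≤ ε) (j : Fin n) :
    contrib (perturb u ε) j = contrib u j := by
  rw [contrib_eq_ite, contrib_eq_ite, C1_perturb hu hε]

end Perturbation

section Solutions

variable {n : ℕ} {ψ : (Finset (Fin n) → ℝ) → Fin n → ℝ} {u v : Finset (Fin n) → ℝ}

lemma AverageEfficient.sum_sub (hAE : AverageEfficient n ψ) (hu : IsMonotoneGame n u)
    (hv : IsMonotoneGame n v) :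
    ∑ j, (ψ v j - ψ u j) =
      ∑ S ∈ (Finset.univ : Finset (Fin n)).powerset, (1 / (2 ^ n - 1 : ℝ)) * (v S - u S) := by
  rw [sum_sub_distrib, hAE v hv, hAE u hu, ← mul_sub, ← sum_sub_distrib, mul_sum]

lemma Invariant.sub_eq_zero (hI : Invariant n ψ) (hu : IsMonotoneGame n u)
    (hv : IsMonotoneGame n v) (hc : ∀ j, contrib v j = contrib u j) {j : Fin n}
    (hj : j ∉ C1 u) : ψ v j - ψ u j = 0 := by
  have hcj := contrib_of_not_mem_C1 hj
  rw [hI v hv j ((hc j).trans hcj), hI u hu j hcj, sub_zero]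

lemma RcParMonotone.sub_eq_sub (hR : RcParMonotone n ψ) (hu : IsMonotoneGame n u)
    (hv : IsMonotoneGame n v) (hc : ∀ j, contrib u j = contrib v j) {i k : Fin n}
    (hik : contrib u i = contrib u k)
    (hS : ∀ S : Finset (Fin n), u (insert i S) - v (insert i S) = u (insert k S) - v (insert k S)) :
    ψ u i - ψ v i = ψ u k - ψ v k :=
  le_antisymm (hR u v hu hv hc k i hik.symm fun S _ _ => (hS S).le)
    (hR u v hu hv hc i k hik fun S _ _ => (hS S).ge)

end Solutions

theorem psi_perturb_increase_general (n : ℕ)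
    (ψ : (Finset (Fin n) → ℝ) → Fin n → ℝ)
    (hAE : ∀ u, IsMonotoneGame n u →
      ∑ i, ψ u i =
        (1 / (2 ^ n - 1 : ℝ)) * ∑ S ∈ (Finset.univ : Finset (Fin n)).powerset, u S)
    (hI : ∀ u, IsMonotoneGame n u → ∀ i : Fin n, contrib u i = 0 → ψ u i = 0)
    (hRcParM : ∀ u v, IsMonotoneGame n u → IsMonotoneGame n v →
      (∀ j : Fin n, contrib u j = contrib v j) → ∀ i k : Fin n,
      contrib u i = contrib u k →
      (∀ S : Finset (Fin n), i ∉ S → k ∉ S →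
        u (insert i S) - v (insert i S) ≥ u (insert k S) - v (insert k S)) →
      ψ u i - ψ v i ≥ ψ u k - ψ v k)
    (u : Finset (Fin n) → ℝ) (hu : IsMonotoneGame n u)
    (ε : ℝ) (hε : 0 < ε) :
    ∀ i ∈ C1 u,
      ψ (perturb u ε) i - ψ u i =
        (1 / ((C1 u).card : ℝ)) *
          ∑ S ∈ (Finset.univ : Finset (Fin n)).powerset,
            (1 / (2 ^ n - 1 : ℝ)) * (perturb u ε S - u S) := by
  intro i hi
  have hv := isMonotoneGame_perturb hu hε.le
  have hc := contrib_perturb hu hε.le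
  have hconst : ∀ k ∈ C1 u, ψ (perturb u ε) k - ψ u k = ψ (perturb u ε) i - ψ u i :=
    fun k hk => RcParMonotone.sub_eq_sub hRcParM hv hu hc
      (by rw [hc, hc, contrib_of_mem_C1 hk, contrib_of_mem_C1 hi])
      (fun S => by rw [perturb_insert_of_mem_C1 hk, perturb_insert_of_mem_C1 hi]; ring)
  have hzero : ∀ j ∈ univ, j ∉ C1 u → ψ (perturb u ε) j - ψ u j = 0 :=
    fun j _ hj => Invariant.sub_eq_zero hI hu hv hc hj
  have hcard : ((C1 u).card : ℝ) ≠ 0 := by exact_mod_cast card_ne_zero_of_mem hi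
  rw [← AverageEfficient.sum_sub hAE hu hv, ← sum_subset (subset_univ _) hzero,
    sum_eq_card_nsmul hconst, nsmul_eq_mul, one_div, inv_mul_cancel_left₀ hcard]

/-- If ψ satisfies average efficiency, invariance and relative c-participation
monotonicity, then for every agent in `C₁` the blame increase from `u` to `u^ε` equals
`(1/|C₁|) * ∑_{S ⊆ N} w * (u^ε S - u S)` with `w = 1 / (2 ^ n - 1)`. -/
theorem psi_perturb_increase (n : ℕ) (hn : 1 ≤ n)
    (ψ : (Finset (Fin n) → ℝ) → Fin n → ℝ)
    (hAE : ∀ u, IsMonotoneGame n u →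
      ∑ i, ψ u i =
        (1 / (2 ^ n - 1 : ℝ)) * ∑ S ∈ (Finset.univ : Finset (Fin n)).powerset, u S)
    (hI : ∀ u, IsMonotoneGame n u → ∀ i : Fin n, contrib u i = 0 → ψ u i = 0)
    (hRcParM : ∀ u v, IsMonotoneGame n u → IsMonotoneGame n v →
      (∀ j : Fin n, contrib u j = contrib v j) → ∀ i k : Fin n,
      contrib u i = contrib u k →
      (∀ S : Finset (Fin n), i ∉ S → k ∉ S →
        u (insert i S) - v (insert i S) ≥ u (insert k S) - v (insert k S)) →
      ψ u i - ψ v i ≥ ψ u k - ψ v k)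
    (u : Finset (Fin n) → ℝ) (hu : IsMonotoneGame n u)
    (hC : (C1 u).Nonempty) (ε : ℝ) (hε : 0 < ε) :
    ∀ i ∈ C1 u,
      ψ (perturb u ε) i - ψ u i =
        (1 / ((C1 u).card : ℝ)) *
          ∑ S ∈ (Finset.univ : Finset (Fin n)).powerset,
            (1 / (2 ^ n - 1 : ℝ)) * (perturb u ε S - u S) :=
  psi_perturb_increase_general n ψ hAE hI hRcParM u hu ε hε
end

section
/- Let ψ be a solution on the class of monotone games satisfying AE (average efficiency), S (symmetry), I (invariance), cParM (c-participation monotonicity) and RcParM (relative c-participation monotonicity). Let u be a monotone game, ε > 0, C₁ = {i ∈ N : c(u, i) = 1}, and let u^ε be the perturbed game defined by u^ε(S) = u(S) + ε if S ∩ C₁ ≠ ∅ and u^ε(S) = u(S) otherwise. Then ψ(u^ε) = AP(u^ε), where AP is the average participation solution. -/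
open Finset
open scoped Classical

/-!
Write `C = C₁`. Every game `b` met below is carried by `C` (`b S = b (S ∩ C)`), monotone, and
positive on coalitions meeting `C`; hence `c(b, ·)` is the indicator of `C` for all of them, and
this is where `ε > 0` is needed. Starting from the game `ε · [S ∩ C ≠ ∅]`, on which AE, S and I
force `ψ = AP`, one reaches `u^ε` by adding the terms `u A · [S ∩ C = A]` one subset `A ⊆ C` at a
time, larger `A` first so that monotonicity is kept. Such a step leaves the marginal contributions
of players outside `A` unchanged and changes those of any two players of `A` by the same amount,
so by I, cParM and RcParM the increment of `ψ` vanishes off `A` and is constant on `A`; by AE its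
total is prescribed. These constraints determine the increment, and `AP` satisfies them as well.
-/

lemma IsMonotoneGame.nonneg {n : ℕ} {u : Finset (Fin n) → ℝ} (hu : IsMonotoneGame n u)
    (T : Finset (Fin n)) : 0 ≤ u T :=
  hu.1 ▸ hu.2 _ _ (empty_subset T)

namespace AvgParticipation

section Finset

variable {α : Type*} [DecidableEq α]

lemma sum_powerset_erase_insert [Fintype α] {β : Type*} [AddCommMonoid β] (f : Finset α → β)
    (i : α) :
    ∑ S ∈ (univ.erase i).powerset, f (insert i S) = ∑ T with i ∈ T, f T := by
  refine sum_nbij' (insert i) (fun T => T.erase i) ?_ ?_ ?_ ?_ fun _ _ => rfl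
  · simp
  · intro T _
    simpa using erase_subset_erase i (subset_univ T)
  · intro S hS
    exact erase_insert fun hi => by simpa using mem_powerset.1 hS hi
  · intro T hT
    exact insert_erase (mem_filter.1 hT).2

lemma sum_filter_mem_perm [Fintype α] {β : Type*} [AddCommMonoid β] (σ : Equiv.Perm α)
    {f : Finset α → β} (hf : ∀ T, f (T.map σ.toEmbedding) = f T) (i : α) :
    ∑ T with σ i ∈ T, f T = ∑ T with i ∈ T, f T := by
  rw [sum_filter, sum_filter]
  refine (Fintype.sum_equiv σ.finsetCongr _ _ fun T => ?_).symm
  simp [hf]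

lemma map_swap_eq_self {A : Finset α} {i k : α} (hi : i ∈ A) (hk : k ∈ A) :
    A.map (Equiv.swap i k).toEmbedding = A := by
  ext x
  rw [mem_map_equiv, Equiv.symm_swap]
  rcases eq_or_ne x i with rfl | hxi
  · simp [hi, hk]
  rcases eq_or_ne x k with rfl | hxk
  · simp [hi, hk]
  · rw [Equiv.swap_apply_of_ne_of_ne hxi hxk]

lemma map_swap_inter {C : Finset α} {i k : α} (hi : i ∈ C) (hk : k ∈ C) (T : Finset α) :
    T.map (Equiv.swap i k).toEmbedding ∩ C = (T ∩ C).map (Equiv.swap i k).toEmbedding := by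
  rw [map_inter, map_swap_eq_self hi hk]

lemma sum_div_card_inter_swap [Fintype α] {C : Finset α} {g : Finset α → ℝ} {i k : α}
    (hi : i ∈ C) (hk : k ∈ C) (hg : ∀ T, g (T.map (Equiv.swap i k).toEmbedding) = g T) :
    ∑ T with i ∈ T, g T / #(T ∩ C) = ∑ T with k ∈ T, g T / #(T ∩ C) := by
  have h := sum_filter_mem_perm (Equiv.swap i k) (f := fun T => g T / #(T ∩ C))
    (fun T => by rw [hg, map_swap_inter hi hk, card_map]) i
  rwa [Equiv.swap_apply_left, eq_comm] at h

end Finset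

lemma eq_zero_of_sum_eq_zero_of_const_on {ι M : Type*} [Fintype ι] [AddCommMonoid M]
    [IsAddTorsionFree M] {f : ι → M} {A : Finset ι} (hsum : ∑ i, f i = 0)
    (hout : ∀ i ∉ A, f i = 0) (hconst : ∀ i ∈ A, ∀ j ∈ A, f i = f j) (i : ι) : f i = 0 := by
  by_cases hi : i ∈ A
  · rw [← sum_subset (subset_univ A) fun j _ hj => hout j hj,
      sum_congr rfl fun j hj => hconst j hj i hi, sum_const] at hsum
    exact (nsmul_eq_zero_iff_right (card_ne_zero_of_mem hi)).1 hsum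
  · exact hout i hi

variable {n : ℕ}

section Contrib

variable {u : Finset (Fin n) → ℝ} {i : Fin n}

lemma contrib_eq_zero_iff : contrib u i = 0 ↔ ∀ S, u (insert i S) = u S := by
  unfold contrib
  split_ifs with h <;> simp [h]

lemma notMem_C1_iff : i ∉ C1 u ↔ contrib u i = 0 := by
  unfold C1 contrib
  split_ifs <;> simp [*]

lemma apply_inter_C1 (T : Finset (Fin n)) : u (T ∩ C1 u) = u T := by
  have key : ∀ D : Finset (Fin n), (∀ j ∈ D, j ∉ C1 u) → ∀ T, u (D ∪ T) = u T := by
    intro D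
    induction D using Finset.induction_on with
    | empty => simp
    | insert j D _ ih =>
      intro hD T
      rw [insert_union, contrib_eq_zero_iff.1 (notMem_C1_iff.1 (hD j (mem_insert_self j D))),
        ih fun l hl => hD l (mem_insert_of_mem hl)]
  conv_rhs => rw [← sdiff_union_inter T (C1 u)]
  exact (key _ (fun j hj => (mem_sdiff.1 hj).2) _).symm

lemma AP_eq_zero_of_contrib_eq_zero (h : contrib u i = 0) : AP u i = 0 :=
  sum_eq_zero fun S _ => by simp [h]

end Contrib

structure IsCarriedBy (C : Finset (Fin n)) (b : Finset (Fin n) → ℝ) : Prop where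
  monotone : IsMonotoneGame n b
  apply_inter : ∀ T, b (T ∩ C) = b T
  pos : ∀ T, (T ∩ C).Nonempty → 0 < b T

namespace IsCarriedBy

variable {C : Finset (Fin n)} {b : Finset (Fin n) → ℝ} (hb : IsCarriedBy C b)
include hb

lemma apply_eq_zero {T : Finset (Fin n)} (hT : T ∩ C = ∅) : b T = 0 := by
  rw [← hb.apply_inter, hT, hb.monotone.1]

lemma contrib_eq (j : Fin n) : contrib b j = if j ∈ C then 1 else 0 := by
  split_ifs with hj
  · rw [contrib, if_neg]
    intro h
    have hpos := hb.pos {j} (by simp [hj])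
    rw [← insert_empty, h, hb.monotone.1] at hpos
    exact lt_irrefl 0 hpos
  · rw [contrib_eq_zero_iff]
    intro S
    rw [← hb.apply_inter, insert_inter_of_notMem hj, hb.apply_inter]

lemma sum_contrib (S : Finset (Fin n)) : ∑ j ∈ S, contrib b j = #(S ∩ C) := by
  simp [hb.contrib_eq]

lemma AP_of_notMem {i : Fin n} (hi : i ∉ C) : AP b i = 0 :=
  AP_eq_zero_of_contrib_eq_zero (by simp [hb.contrib_eq, hi])

lemma AP_eq_sum {i : Fin n} (hi : i ∈ C) :
    AP b i = (1 / (2 ^ n - 1 : ℝ)) * ∑ T with i ∈ T, b T / #(T ∩ C) := by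
  rw [AP, mul_sum,
    ← sum_powerset_erase_insert fun T => (1 / (2 ^ n - 1 : ℝ)) * (b T / #(T ∩ C))]
  refine sum_congr rfl fun S hS => ?_
  have hiS : i ∉ S ∩ C := fun h => by simpa using mem_powerset.1 hS (mem_inter.1 h).1
  rw [hb.sum_contrib, hb.contrib_eq, if_pos hi, insert_inter_of_mem hi,
    card_insert_of_notMem hiS]
  push_cast
  ring

lemma card_inter_mul_div (T : Finset (Fin n)) : #(T ∩ C) * (b T / #(T ∩ C)) = b T := by
  rcases (T ∩ C).eq_empty_or_nonempty with h | h
  · simp [h, hb.apply_eq_zero h]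
  · have : (#(T ∩ C) : ℝ) ≠ 0 := by exact_mod_cast h.card_pos.ne'
    field_simp

lemma sum_AP :
    ∑ i, AP b i = (1 / (2 ^ n - 1 : ℝ)) * ∑ S ∈ (univ : Finset (Fin n)).powerset, b S := by
  calc ∑ i, AP b i = ∑ i ∈ C, AP b i :=
        (sum_subset (subset_univ C) fun i _ hi => hb.AP_of_notMem hi).symm
    _ = (1 / (2 ^ n - 1 : ℝ)) * ∑ i ∈ C, ∑ T with i ∈ T, b T / #(T ∩ C) := by
        rw [mul_sum]
        exact sum_congr rfl fun i hi => hb.AP_eq_sum hi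
    _ = (1 / (2 ^ n - 1 : ℝ)) * ∑ T, ∑ i ∈ C, if i ∈ T then b T / #(T ∩ C) else 0 := by
        simp_rw [sum_filter]
        rw [sum_comm]
    _ = (1 / (2 ^ n - 1 : ℝ)) * ∑ S ∈ (univ : Finset (Fin n)).powerset, b S := by
        rw [powerset_univ]
        congr 1
        refine sum_congr rfl fun T _ => ?_
        rw [sum_ite_mem, sum_const, nsmul_eq_mul, inter_comm, hb.card_inter_mul_div]

lemma AP_sub_AP {b' : Finset (Fin n) → ℝ} (hb' : IsCarriedBy C b') {i : Fin n} (hi : i ∈ C) :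
    AP b' i - AP b i = (1 / (2 ^ n - 1 : ℝ)) * ∑ T with i ∈ T, (b' T - b T) / #(T ∩ C) := by
  simp only [hb'.AP_eq_sum hi, hb.AP_eq_sum hi, ← mul_sub, ← sum_sub_distrib, sub_div]

end IsCarriedBy

section UpperFamily

variable {α : Type*} {C : Finset α} {U : Finset (Finset α)}

def IsUpperFamily (C : Finset α) (U : Finset (Finset α)) : Prop :=
  ∀ A ∈ U, A ⊆ C ∧ ∀ A', A ⊆ A' → A' ⊆ C → A' ∈ U

lemma isUpperFamily_powerset (C : Finset α) : IsUpperFamily C C.powerset :=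
  fun _ hA => ⟨mem_powerset.1 hA, fun _ _ hA' => mem_powerset.2 hA'⟩

lemma IsUpperFamily.erase [DecidableEq α] {A₀ : Finset α} (hU : IsUpperFamily C U)
    (hmin : ∀ A ∈ U, #A₀ ≤ #A) : IsUpperFamily C (U.erase A₀) := by
  intro A hA
  obtain ⟨hA₀A, hAU⟩ := mem_erase.1 hA
  refine ⟨(hU A hAU).1, fun A' hAA' hA'C => mem_erase.2 ⟨?_, (hU A hAU).2 A' hAA' hA'C⟩⟩
  rintro rfl
  exact (hmin A hAU).not_gt (card_lt_card (ssubset_of_subset_of_ne hAA' hA₀A))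

end UpperFamily

/-- Interpolates between `ε · [T ∩ C ≠ ∅]` (for `U = ∅`) and `u^ε` (for `U = C.powerset`). -/
noncomputable def partialPerturb (C : Finset (Fin n)) (u : Finset (Fin n) → ℝ) (ε : ℝ)
    (U : Finset (Finset (Fin n))) (T : Finset (Fin n)) : ℝ :=
  (if (T ∩ C).Nonempty then ε else 0) + if T ∩ C ∈ U then u (T ∩ C) else 0

section PartialPerturb

variable {C : Finset (Fin n)} {u : Finset (Fin n) → ℝ} {ε : ℝ} {U : Finset (Finset (Fin n))}

lemma isCarriedBy_partialPerturb (hu : IsMonotoneGame n u) (hε : 0 < ε)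
    (hU : IsUpperFamily C U) : IsCarriedBy C (partialPerturb C u ε U) := by
  have hpart_nonneg : ∀ T, 0 ≤ if T ∩ C ∈ U then u (T ∩ C) else 0 := fun T => by
    split_ifs
    exacts [hu.nonneg _, le_rfl]
  refine ⟨⟨by simp [partialPerturb, hu.1], fun S T hST => ?_⟩, fun T => ?_, fun T hT => ?_⟩
  · have hSCT : S ∩ C ⊆ T ∩ C := inter_subset_inter_right hST
    refine add_le_add ?_ ?_
    · split_ifs with hS hT
      exacts [le_rfl, absurd (hS.mono hSCT) hT, hε.le, le_rfl]
    · split_ifs with hS hT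
      · exact hu.2 _ _ hSCT
      · exact absurd ((hU _ hS).2 _ hSCT inter_subset_right) hT
      · exact hu.nonneg _
      · exact le_rfl
  · simp [partialPerturb, inter_assoc]
  · rw [partialPerturb, if_pos hT]
    exact add_pos_of_pos_of_nonneg hε (hpart_nonneg T)

lemma partialPerturb_eq_erase_add {A : Finset (Fin n)} (hA : A ∈ U) (T : Finset (Fin n)) :
    partialPerturb C u ε U T =
      partialPerturb C u ε (U.erase A) T + if T ∩ C = A then u A else 0 := by
  rw [partialPerturb, partialPerturb, add_assoc]
  congr 1
  by_cases h : T ∩ C = A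
  · simp [h, hA]
  · simp [h]

lemma perturb_eq_partialPerturb (hu : u ∅ = 0) :
    perturb u ε = partialPerturb (C1 u) u ε (C1 u).powerset := by
  funext T
  simp only [perturb, partialPerturb, mem_powerset, inter_subset_right, if_true, apply_inter_C1]
  split_ifs with h
  · ring
  · rw [← apply_inter_C1 (u := u) T, not_nonempty_iff_eq_empty.1 h, hu, zero_add]

end PartialPerturb

section Axioms

variable (ψ : (Finset (Fin n) → ℝ) → Fin n → ℝ)

def AverageEfficient : Prop :=
  ∀ u, IsMonotoneGame n u →
    ∑ i, ψ u i = (1 / (2 ^ n - 1 : ℝ)) * ∑ S ∈ (Finset.univ : Finset (Fin n)).powerset, u S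

def EqualTreatment : Prop :=
  ∀ u, IsMonotoneGame n u → ∀ i j : Fin n,
    (∀ S : Finset (Fin n), i ∉ S → j ∉ S → u (insert i S) = u (insert j S)) → ψ u i = ψ u j

def NullPlayer : Prop :=
  ∀ u, IsMonotoneGame n u → ∀ i : Fin n, contrib u i = 0 → ψ u i = 0

def ParMonotone : Prop :=
  ∀ u v, IsMonotoneGame n u → IsMonotoneGame n v →
    (∀ j : Fin n, contrib u j = contrib v j) → ∀ i : Fin n,
    (∀ S : Finset (Fin n), u (insert i S) ≥ v (insert i S)) → ψ u i ≥ ψ v i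

def RelParMonotone : Prop :=
  ∀ u v, IsMonotoneGame n u → IsMonotoneGame n v →
    (∀ j : Fin n, contrib u j = contrib v j) → ∀ i k : Fin n,
    contrib u i = contrib u k →
    (∀ S : Finset (Fin n), i ∉ S → k ∉ S →
      u (insert i S) - v (insert i S) ≥ u (insert k S) - v (insert k S)) →
    ψ u i - ψ v i ≥ ψ u k - ψ v k

variable {ψ} {u v : Finset (Fin n) → ℝ}

lemma ParMonotone.apply_eq (h : ParMonotone ψ) (hu : IsMonotoneGame n u)
    (hv : IsMonotoneGame n v) (hc : ∀ j, contrib u j = contrib v j) (i : Fin n)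
    (huv : ∀ S, u (insert i S) = v (insert i S)) : ψ u i = ψ v i :=
  le_antisymm (h v u hv hu (fun j => (hc j).symm) i fun S => (huv S).le)
    (h u v hu hv hc i fun S => (huv S).ge)

lemma RelParMonotone.sub_eq (h : RelParMonotone ψ) (hu : IsMonotoneGame n u)
    (hv : IsMonotoneGame n v) (hc : ∀ j, contrib u j = contrib v j) (i k : Fin n)
    (hik : contrib u i = contrib u k)
    (huv : ∀ S, i ∉ S → k ∉ S →
      u (insert i S) - v (insert i S) = u (insert k S) - v (insert k S)) :
    ψ u i - ψ v i = ψ u k - ψ v k :=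
  le_antisymm (h u v hu hv hc k i hik.symm fun S hk hi => (huv S hi hk).le)
    (h u v hu hv hc i k hik fun S hi hk => (huv S hi hk).ge)

end Axioms

section Uniqueness

variable {ψ : (Finset (Fin n) → ℝ) → Fin n → ℝ} {C : Finset (Fin n)}

lemma eq_AP_partialPerturb_empty (hAE : AverageEfficient ψ) (hS : EqualTreatment ψ)
    (hI : NullPlayer ψ) {u : Finset (Fin n) → ℝ} (hu : IsMonotoneGame n u) {ε : ℝ}
    (hε : 0 < ε) (i : Fin n) : ψ (partialPerturb C u ε ∅) i = AP (partialPerturb C u ε ∅) i := by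
  set b := partialPerturb C u ε ∅
  have hb : IsCarriedBy C b :=
    isCarriedBy_partialPerturb hu hε fun _ h => absurd h (notMem_empty _)
  have hbT : ∀ T, b T = if (T ∩ C).Nonempty then ε else 0 := by simp [b, partialPerturb]
  suffices h : ∀ j, ψ b j - AP b j = 0 from sub_eq_zero.1 (h i)
  refine eq_zero_of_sum_eq_zero_of_const_on (A := C) ?_ (fun j hj => ?_) fun j hj l hl => ?_
  · rw [sum_sub_distrib, hAE b hb.monotone, hb.sum_AP, sub_self]
  · rw [hI b hb.monotone j (by simp [hb.contrib_eq, hj]), hb.AP_of_notMem hj, sub_self]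
  · congr 1
    · refine hS b hb.monotone j l fun S _ _ => ?_
      rw [hbT, hbT, if_pos ⟨j, by simp [hj]⟩, if_pos ⟨l, by simp [hl]⟩]
    · rw [hb.AP_eq_sum hj, hb.AP_eq_sum hl, sum_div_card_inter_swap hj hl fun T => ?_]
      simp only [hbT, map_swap_inter hj hl, map_nonempty]

lemma ite_inter_eq_map_swap {A : Finset (Fin n)} (hAC : A ⊆ C) (c : ℝ) {j l : Fin n}
    (hj : j ∈ A) (hl : l ∈ A) (T : Finset (Fin n)) :
    (if T.map (Equiv.swap j l).toEmbedding ∩ C = A then c else 0) =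
      if T ∩ C = A then c else 0 := by
  simp only [map_swap_inter (hAC hj) (hAC hl)]
  conv_lhs => rw [← map_swap_eq_self hj hl]
  simp only [map_inj]

lemma ite_insert_inter_eq {A : Finset (Fin n)} (c : ℝ) {j l : Fin n} (hj : j ∈ A) (hl : l ∈ A)
    {S : Finset (Fin n)} (hjS : j ∉ S) (hlS : l ∉ S) :
    (if insert j S ∩ C = A then c else 0) = if insert l S ∩ C = A then c else 0 := by
  rcases eq_or_ne j l with rfl | hjl
  · rfl
  have hne : ∀ p q, p ∈ A → p ≠ q → p ∉ S → insert q S ∩ C ≠ A := fun p q hp hpq hpS hT => by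
    rw [← hT] at hp
    simp [hpq, hpS] at hp
  rw [if_neg (hne l j hl hjl.symm hlS), if_neg (hne j l hj hjl hjS)]

lemma eq_AP_of_eq_AP_add_ite (hAE : AverageEfficient ψ) (hI : NullPlayer ψ)
    (hcParM : ParMonotone ψ) (hRcParM : RelParMonotone ψ) {b b' : Finset (Fin n) → ℝ}
    (hb : IsCarriedBy C b) (hb' : IsCarriedBy C b') {A : Finset (Fin n)} (hAC : A ⊆ C) (c : ℝ)
    (hstep : ∀ T, b' T = b T + if T ∩ C = A then c else 0) (h : ∀ i, ψ b i = AP b i)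
    (i : Fin n) : ψ b' i = AP b' i := by
  have hcontrib : ∀ j, contrib b' j = contrib b j := by simp [hb.contrib_eq, hb'.contrib_eq]
  have hsub : ∀ T, b' T - b T = if T ∩ C = A then c else 0 := fun T => by
    rw [hstep, add_sub_cancel_left]
  have hoff : ∀ j ∈ C, j ∉ A → ∀ T, j ∈ T → b' T = b T := fun j hjC hjA T hjT => by
    rw [hstep, if_neg fun hT : T ∩ C = A => hjA (hT ▸ mem_inter.2 ⟨hjT, hjC⟩), add_zero]
  suffices hzero : ∀ j, (ψ b' j - ψ b j) - (AP b' j - AP b j) = 0 by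
    linarith [hzero i, h i]
  refine eq_zero_of_sum_eq_zero_of_const_on (A := A) ?_ (fun j hjA => ?_) fun j hj l hl => ?_
  · simp only [sum_sub_distrib, hAE _ hb'.monotone, hAE _ hb.monotone, hb'.sum_AP, hb.sum_AP,
      sub_self]
  · by_cases hjC : j ∈ C
    · rw [hcParM.apply_eq hb'.monotone hb.monotone hcontrib j
        (fun S => hoff j hjC hjA _ (mem_insert_self j S)), hb.AP_sub_AP hb' hjC,
        sum_congr rfl fun T hT => by rw [hoff j hjC hjA T (mem_filter.1 hT).2]]
      simp
    · have hj0 : ∀ {g}, IsCarriedBy C g → contrib g j = 0 := fun hg => by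
        simp [hg.contrib_eq, hjC]
      rw [hI _ hb'.monotone j (hj0 hb'), hI _ hb.monotone j (hj0 hb), hb'.AP_of_notMem hjC,
        hb.AP_of_notMem hjC]
      ring
  · have hψ := hRcParM.sub_eq hb'.monotone hb.monotone hcontrib j l
      (by simp [hb'.contrib_eq, hAC hj, hAC hl])
      fun S hjS hlS => by rw [hsub, hsub, ite_insert_inter_eq c hj hl hjS hlS]
    rw [hψ, hb.AP_sub_AP hb' (hAC hj), hb.AP_sub_AP hb' (hAC hl),
      sum_div_card_inter_swap (hAC hj) (hAC hl) fun T => by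
        rw [hsub, hsub, ite_inter_eq_map_swap hAC c hj hl]]

lemma eq_AP_partialPerturb (hAE : AverageEfficient ψ) (hS : EqualTreatment ψ)
    (hI : NullPlayer ψ) (hcParM : ParMonotone ψ) (hRcParM : RelParMonotone ψ)
    {u : Finset (Fin n) → ℝ} (hu : IsMonotoneGame n u) {ε : ℝ} (hε : 0 < ε) (U : Finset (Finset (Fin n)))
    (hU : IsUpperFamily C U) (i : Fin n) :
    ψ (partialPerturb C u ε U) i = AP (partialPerturb C u ε U) i := by
  induction U using Finset.strongInduction generalizing i with
  | H U ih =>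
    rcases U.eq_empty_or_nonempty with rfl | hne
    · exact eq_AP_partialPerturb_empty hAE hS hI hu hε i
    obtain ⟨A, hA, hmin⟩ := exists_min_image U card hne
    have hU' := hU.erase hmin
    exact eq_AP_of_eq_AP_add_ite hAE hI hcParM hRcParM (isCarriedBy_partialPerturb hu hε hU')
      (isCarriedBy_partialPerturb hu hε hU) (hU A hA).1 (u A) (partialPerturb_eq_erase_add hA)
      (ih _ (erase_ssubset hA) hU') i

end Uniqueness

end AvgParticipation

theorem psi_eq_ap_on_perturb_general (n : ℕ)
    (ψ : (Finset (Fin n) → ℝ) → Fin n → ℝ)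
    (hAE : ∀ u, IsMonotoneGame n u →
      ∑ i, ψ u i =
        (1 / (2 ^ n - 1 : ℝ)) * ∑ S ∈ (Finset.univ : Finset (Fin n)).powerset, u S)
    (hS : ∀ u, IsMonotoneGame n u → ∀ i j : Fin n,
      (∀ S : Finset (Fin n), i ∉ S → j ∉ S → u (insert i S) = u (insert j S)) →
      ψ u i = ψ u j)
    (hI : ∀ u, IsMonotoneGame n u → ∀ i : Fin n, contrib u i = 0 → ψ u i = 0)
    (hcParM : ∀ u v, IsMonotoneGame n u → IsMonotoneGame n v →
      (∀ j : Fin n, contrib u j = contrib v j) → ∀ i : Fin n,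
      (∀ S : Finset (Fin n), u (insert i S) ≥ v (insert i S)) → ψ u i ≥ ψ v i)
    (hRcParM : ∀ u v, IsMonotoneGame n u → IsMonotoneGame n v →
      (∀ j : Fin n, contrib u j = contrib v j) → ∀ i k : Fin n,
      contrib u i = contrib u k →
      (∀ S : Finset (Fin n), i ∉ S → k ∉ S →
        u (insert i S) - v (insert i S) ≥ u (insert k S) - v (insert k S)) →
      ψ u i - ψ v i ≥ ψ u k - ψ v k)
    (u : Finset (Fin n) → ℝ) (hu : IsMonotoneGame n u) (ε : ℝ) (hε : 0 < ε) :
    ∀ i : Fin n, ψ (perturb u ε) i = AP (perturb u ε) i := by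
  rw [AvgParticipation.perturb_eq_partialPerturb hu.1]
  exact AvgParticipation.eq_AP_partialPerturb hAE hS hI hcParM hRcParM hu hε _
    (AvgParticipation.isUpperFamily_powerset _)

/-- If ψ satisfies AE, S, I, cParM and RcParM, then ψ agrees with AP on the perturbed
game `u^ε`. -/
theorem psi_eq_ap_on_perturb (n : ℕ) (hn : 1 ≤ n)
    (ψ : (Finset (Fin n) → ℝ) → Fin n → ℝ)
    (hAE : ∀ u, IsMonotoneGame n u →
      ∑ i, ψ u i =
        (1 / (2 ^ n - 1 : ℝ)) * ∑ S ∈ (Finset.univ : Finset (Fin n)).powerset, u S)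
    (hS : ∀ u, IsMonotoneGame n u → ∀ i j : Fin n,
      (∀ S : Finset (Fin n), i ∉ S → j ∉ S → u (insert i S) = u (insert j S)) →
      ψ u i = ψ u j)
    (hI : ∀ u, IsMonotoneGame n u → ∀ i : Fin n, contrib u i = 0 → ψ u i = 0)
    (hcParM : ∀ u v, IsMonotoneGame n u → IsMonotoneGame n v →
      (∀ j : Fin n, contrib u j = contrib v j) → ∀ i : Fin n,
      (∀ S : Finset (Fin n), u (insert i S) ≥ v (insert i S)) → ψ u i ≥ ψ v i)
    (hRcParM : ∀ u v, IsMonotoneGame n u → IsMonotoneGame n v →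
      (∀ j : Fin n, contrib u j = contrib v j) → ∀ i k : Fin n,
      contrib u i = contrib u k →
      (∀ S : Finset (Fin n), i ∉ S → k ∉ S →
        u (insert i S) - v (insert i S) ≥ u (insert k S) - v (insert k S)) →
      ψ u i - ψ v i ≥ ψ u k - ψ v k)
    (u : Finset (Fin n) → ℝ) (hu : IsMonotoneGame n u) (ε : ℝ) (hε : 0 < ε) :
    ∀ i : Fin n, ψ (perturb u ε) i = AP (perturb u ε) i :=
  psi_eq_ap_on_perturb_general n ψ hAE hS hI hcParM hRcParM u hu ε hε
end
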